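/- arXiv:math/9806140 — 6 statements merged into one kernel-verified Lean document; each statement's English description precedes it below -/
import Mathlib

section
/- Let h > 0. For every k ∈ ℤ the series of diagonal eigenvalues of the deviation A_{k,−k} = [L_k, L_{−k}] − 2k·L_0 converges absolutely, and Σ_{j=0}^∞ a_k(j) = −((6h²−6h+1)/6)·(k³−k). (Consequently each deviation A_{i,j} has a well-defined trace equal to the fundamental form α_{i,j} = ((6h²−6h+1)/6)·(j³−j)·δ_{i+j,0}: for i+j ≠ 0 the operator A_{i,j} shifts every monomial z^l to a multiple of z^{l+i+j}, so all its diagonal entries vanish.) -/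
open Polynomial

noncomputable section

/-- Multiplication by `X` (the operator `l₋₁`). -/
def mulX : Module.End ℂ (Polynomial ℂ) := LinearMap.mulLeft ℂ (X : Polynomial ℂ)

/-- The differentiation operator `d/dz` (the operator `D`). -/
def der : Module.End ℂ (Polynomial ℂ) := Polynomial.derivative

/-- The generators `l₋₁, l₀, l₁` of `sl(2,ℂ)` acting on the Verma module `V_h ≅ ℂ[z]`. -/
def lgen (h : ℝ) (i : ℤ) : Module.End ℂ (Polynomial ℂ) :=
  if i = -1 then mulX
  else if i = 0 then mulX * der + (h : ℂ) • 1
  else if i = 1 then mulX * der * der + ((2 * h : ℝ) : ℂ) • der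
  else 0

/-- The operator `F`, `F zⁿ = zⁿ⁺¹/(n+2h)`. -/
def Fop (h : ℝ) : Module.End ℂ (Polynomial ℂ) :=
  (Polynomial.basisMonomials ℂ).constr ℂ fun n =>
    (((n : ℂ) + 2 * (h : ℂ))⁻¹) • (X : Polynomial ℂ) ^ (n + 1)

/-- The `q_R`-conformal symmetries `L_k` (`k ∈ ℤ`) acting on `ℂ[z]`. -/
def Lop (h : ℝ) (k : ℤ) : Module.End ℂ (Polynomial ℂ) :=
  (Polynomial.basisMonomials ℂ).constr ℂ fun n =>
    if 0 ≤ k then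
      ((((n : ℂ) - (k : ℂ)) + ((k : ℂ) + 1) * (h : ℂ)) * (n.descFactorial k.toNat : ℂ)) •
        (X : Polynomial ℂ) ^ (n - k.toNat)
    else
      (((n : ℂ) + (((-k).toNat : ℂ) + 1) * (h : ℂ)) /
          ∏ j ∈ Finset.range (-k).toNat, ((n : ℂ) + 2 * (h : ℂ) + (j : ℂ))) •
        (X : Polynomial ℂ) ^ (n + (-k).toNat)

/-- The deviations `A_{n,m} = [L_n, L_m] − (n−m)·L_{n+m}`. -/
def dev (h : ℝ) (n m : ℤ) : Module.End ℂ (Polynomial ℂ) :=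
  Lop h n * Lop h m - Lop h m * Lop h n - ((n - m : ℤ) : ℂ) • Lop h (n + m)

/-- The diagonal eigenvalue `a_k(j)` of the deviation `A_{k,−k}` on the monomial `z^j`. -/
def adiag (h : ℝ) (k : ℤ) (j : ℕ) : ℂ := ((dev h k (-k)) ((X : Polynomial ℂ) ^ j)).coeff j

/-- The weight `⟨zⁿ, zⁿ⟩ = n!·(2h)(2h+1)⋯(2h+n−1)`. -/
def wgt (h : ℝ) (n : ℕ) : ℝ := (n.factorial : ℝ) * ∏ j ∈ Finset.range n, (2 * h + (j : ℝ))

/-- The inner product of the unitarizable Verma module (`h > 0`), conjugate-linear in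
the first argument. -/
def ip (h : ℝ) (p q : Polynomial ℂ) : ℂ :=
  ∑ n ∈ p.support, (starRingEnd ℂ) (p.coeff n) * q.coeff n * ((wgt h n : ℝ) : ℂ)

/-- The associated norm. -/
def nrm (h : ℝ) (p : Polynomial ℂ) : ℝ := Real.sqrt (ip h p p).re

/-- The fundamental form `α_{i,j} = ((6h²−6h+1)/6)·(j³−j)·δ_{i+j,0}`. -/
def alphaF (h : ℝ) (i j : ℤ) : ℝ :=
  if i + j = 0 then ((6 * h ^ 2 - 6 * h + 1) / 6) * ((j : ℝ) ^ 3 - (j : ℝ)) else 0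

/-- The inverse fundamental form `α^{k,−k} = −1/α_{k,−k}` (for `|k| ≥ 2`). -/
def alphaInv (h : ℝ) (k : ℤ) : ℝ := -1 / alphaF h k (-k)



open Finset Filter

lemma basis_eq (n : ℕ) : (Polynomial.basisMonomials ℂ) n = (X : Polynomial ℂ) ^ n := by
  simp [Polynomial.coe_basisMonomials, X_pow_eq_monomial]

lemma Lop_apply_nonneg (h : ℝ) {k : ℤ} (hk : 0 ≤ k) (n : ℕ) :
    Lop h k ((X : Polynomial ℂ) ^ n) =
      ((((n : ℂ) - (k : ℂ)) + ((k : ℂ) + 1) * (h : ℂ)) * (n.descFactorial k.toNat : ℂ)) •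
        (X : Polynomial ℂ) ^ (n - k.toNat) := by
  rw [← basis_eq, Lop, Module.Basis.constr_basis, if_pos hk]

lemma Lop_apply_neg (h : ℝ) {k : ℤ} (hk : k < 0) (n : ℕ) :
    Lop h k ((X : Polynomial ℂ) ^ n) =
      (((n : ℂ) + (((-k).toNat : ℂ) + 1) * (h : ℂ)) /
          ∏ j ∈ Finset.range (-k).toNat, ((n : ℂ) + 2 * (h : ℂ) + (j : ℂ))) •
        (X : Polynomial ℂ) ^ (n + (-k).toNat) := by
  rw [← basis_eq, Lop, Module.Basis.constr_basis, if_neg (by omega)]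

lemma Lop_struct (h : ℝ) (a : ℤ) (n : ℕ) :
    ∃ (c : ℂ) (m : ℕ), Lop h a ((X : Polynomial ℂ) ^ n) = c • (X : Polynomial ℂ) ^ m ∧
      (c = 0 ∨ (m : ℤ) = n - a) := by
  rcases le_or_gt 0 a with ha | ha
  · refine ⟨_, _, Lop_apply_nonneg h ha n, ?_⟩
    rcases le_or_gt a.toNat n with hle | hlt
    · right; omega
    · left
      rw [Nat.descFactorial_eq_zero_iff_lt.mpr hlt]
      simp
  · refine ⟨_, _, Lop_apply_neg h ha n, ?_⟩
    right; omega

lemma coeff_self_of_ne {c : ℂ} {m l : ℕ} (hml : c = 0 ∨ (m ≠ l)) :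
    (c • (X : Polynomial ℂ) ^ m).coeff l = 0 := by
  rcases hml with rfl | hml
  · simp
  · simp [coeff_X_pow, Ne.symm hml]

lemma coeff_comp_zero (h : ℝ) {a b : ℤ} (hab : a + b ≠ 0) (l : ℕ) :
    ((Lop h a) ((Lop h b) ((X : Polynomial ℂ) ^ l))).coeff l = 0 := by
  obtain ⟨c1, m1, e1, d1⟩ := Lop_struct h b l
  obtain ⟨c2, m2, e2, d2⟩ := Lop_struct h a m1
  rw [e1, map_smul, e2, smul_smul, coeff_smul, smul_eq_mul]
  rcases d1 with rfl | d1
  · simp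
  · rcases d2 with rfl | d2
    · simp
    · rw [coeff_X_pow, if_neg (by omega)]
      ring

theorem offdiag (h : ℝ) (i j : ℤ) (hij : i + j ≠ 0) (l : ℕ) :
    ((dev h i j) ((X : Polynomial ℂ) ^ l)).coeff l = 0 := by
  obtain ⟨c5, m5, e5, d5⟩ := Lop_struct h (i + j) l
  simp only [dev, LinearMap.sub_apply, Module.End.mul_apply, LinearMap.smul_apply,
    coeff_sub, coeff_smul, smul_eq_mul]
  rw [coeff_comp_zero h hij, coeff_comp_zero h (by omega : j + i ≠ 0), e5, coeff_smul,
    smul_eq_mul]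
  rcases d5 with rfl | d5
  · ring
  · rw [coeff_X_pow, if_neg (by omega)]
    ring

lemma sum_cast_range (K : ℕ) : ∑ i ∈ range K, (i : ℝ) = K * (K - 1) / 2 := by
  induction K with
  | zero => simp
  | succ n ih => rw [sum_range_succ, ih]; push_cast; ring

lemma sum_sq_range (K : ℕ) : ∑ i ∈ range K, (i : ℝ) ^ 2 = K * (K - 1) * (2 * K - 1) / 6 := by
  induction K with
  | zero => simp
  | succ n ih => rw [sum_range_succ, ih]; push_cast; ring

lemma coeff_mul_XC (P : ℝ[X]) (c : ℝ) (n : ℕ) :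
    (P * (X + C c)).coeff (n + 1) = P.coeff n + c * P.coeff (n + 1) := by
  rw [mul_add, coeff_add, coeff_mul_X, coeff_mul_C, mul_comm]

lemma prodXC_monic (f : ℕ → ℝ) (K : ℕ) : (∏ i ∈ range K, (X + C (f i))).Monic :=
  monic_prod_of_monic _ _ fun i _ => monic_X_add_C (f i)

lemma prodXC_natDegree (f : ℕ → ℝ) (K : ℕ) :
    (∏ i ∈ range K, (X + C (f i))).natDegree = K := by
  rw [natDegree_prod _ _ fun i _ => X_add_C_ne_zero (f i)]
  simp

lemma prodXC_coeff_top (f : ℕ → ℝ) (K : ℕ) :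
    (∏ i ∈ range K, (X + C (f i))).coeff K = 1 := by
  have := (prodXC_monic f K).leadingCoeff
  rwa [leadingCoeff, prodXC_natDegree] at this

lemma prodXC_coeff_hi (f : ℕ → ℝ) (K m : ℕ) (hm : K < m) :
    (∏ i ∈ range K, (X + C (f i))).coeff m = 0 :=
  coeff_eq_zero_of_natDegree_lt (by rw [prodXC_natDegree]; exact hm)

lemma prodXC_coeff_sub1 (f : ℕ → ℝ) (K : ℕ) :
    (∏ i ∈ range (K + 1), (X + C (f i))).coeff K = ∑ i ∈ range (K + 1), f i := by
  induction K with
  | zero => simp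
  | succ n ih =>
    rw [prod_range_succ, coeff_mul_XC, ih, prodXC_coeff_top]
    simp only [sum_range_succ]
    ring

lemma prodXC_coeff_sub2 (f : ℕ → ℝ) (K : ℕ) :
    (∏ i ∈ range (K + 2), (X + C (f i))).coeff K =
      ((∑ i ∈ range (K + 2), f i) ^ 2 - ∑ i ∈ range (K + 2), (f i) ^ 2) / 2 := by
  induction K with
  | zero =>
    rw [prod_range_succ, prod_range_one, coeff_zero_eq_eval_zero]
    simp [sum_range_succ]
    ring
  | succ n ih =>
    rw [prod_range_succ, coeff_mul_XC, ih, prodXC_coeff_sub1]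
    simp only [sum_range_succ]
    ring

lemma eE1 (K : ℕ) : ∑ i ∈ range K, ((i : ℝ) + 1) = K * (K + 1) / 2 := by
  rw [sum_add_distrib, sum_cast_range, sum_const, card_range, nsmul_eq_mul]; ring

lemma eE2 (K : ℕ) : ∑ i ∈ range K, ((i : ℝ) + 1) ^ 2 = (K : ℝ) * (K + 1) * (2 * K + 1) / 6 := by
  have e : ∀ i : ℕ, ((i : ℝ) + 1) ^ 2 = (i : ℝ) ^ 2 + 2 * (i : ℝ) + 1 := fun i => by ring
  have h2 : ∑ i ∈ range K, 2 * (i : ℝ) = 2 * (K * (K - 1) / 2) := by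
    rw [← mul_sum, sum_cast_range]
  simp only [e]
  rw [sum_add_distrib, sum_add_distrib, h2, sum_sq_range, sum_const, card_range, nsmul_eq_mul]
  ring

lemma eD1 (h : ℝ) (K : ℕ) : ∑ i ∈ range K, (2 * h + (i : ℝ)) = 2 * h * K + K * (K - 1) / 2 := by
  rw [sum_add_distrib, sum_cast_range, sum_const, card_range, nsmul_eq_mul]; ring

lemma eD2 (h : ℝ) (K : ℕ) : ∑ i ∈ range K, (2 * h + (i : ℝ)) ^ 2 =
    4 * h ^ 2 * K + 2 * h * K * (K - 1) + (K : ℝ) * (K - 1) * (2 * K - 1) / 6 := by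
  have e : ∀ i : ℕ, (2 * h + (i : ℝ)) ^ 2 = 4 * h ^ 2 + 4 * h * i + (i : ℝ) ^ 2 := fun i => by
    ring
  have h1 : ∑ _i ∈ range K, 4 * h ^ 2 = (K : ℝ) * (4 * h ^ 2) := by
    rw [sum_const, card_range, nsmul_eq_mul]
  have h2 : ∑ i ∈ range K, 4 * h * (i : ℝ) = 4 * h * (K * (K - 1) / 2) := by
    rw [← mul_sum, sum_cast_range]
  simp only [e]
  rw [sum_add_distrib, sum_add_distrib, h1, h2, sum_sq_range]
  ring

lemma coeff_quad_mul (b c : ℝ) (E : ℝ[X]) (n : ℕ) :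
    ((X ^ 2 + C b * X + C c) * E).coeff (n + 2) =
      E.coeff n + b * E.coeff (n + 1) + c * E.coeff (n + 2) := by
  rw [add_mul, add_mul, coeff_add, coeff_add, mul_assoc,
    show n + 2 = n + 1 + 1 from rfl, coeff_C_mul, coeff_X_mul, coeff_C_mul,
    show n + 1 + 1 = n + 2 from rfl, coeff_X_pow_mul]

lemma sq_XC (a : ℝ) : (X + C a) ^ 2 = X ^ 2 + C (2 * a) * X + C (a ^ 2) := by
  have h1 : C (2 * a) = 2 * C a := by rw [map_mul, map_ofNat]
  rw [h1, add_sq, map_pow]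
  ring

def Ep (K : ℕ) : ℝ[X] := ∏ i ∈ range K, (X + C ((i : ℝ) + 1))
def Dp (h : ℝ) (K : ℕ) : ℝ[X] := ∏ i ∈ range K, (X + C (2 * h + (i : ℝ)))

def Cv (h : ℝ) (K : ℕ) : ℝ :=
  ((K : ℝ) + 1) ^ 2 * h ^ 2 + ((K : ℝ) + 1) * h * (K * (K + 1))
  + (((K : ℝ) * (K + 1) / 2) ^ 2 - K * (K + 1) * (2 * K + 1) / 6) / 2
  - ((2 * h * K + (K : ℝ) * (K - 1) / 2) ^ 2
      - (4 * h ^ 2 * K + 2 * h * K * (K - 1) + (K : ℝ) * (K - 1) * (2 * K - 1) / 6)) / 2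
  - (2 * h * K + (K : ℝ) * (K - 1) / 2) * (2 * h + K)

def Np (h : ℝ) (K : ℕ) : ℝ[X] := (X + C (((K : ℝ) + 1) * h)) ^ 2 * Ep K
def Pp (h : ℝ) (K : ℕ) : ℝ[X] := X ^ 2 + C (2 * h + (K : ℝ)) * X + C (Cv h K)
def Rp (h : ℝ) (K : ℕ) : ℝ[X] := Np h K - Pp h K * Dp h K

lemma Rp_coeff (h : ℝ) {K : ℕ} (hK : 2 ≤ K) : ∀ m, K ≤ m → (Rp h K).coeff m = 0 := by
  obtain ⟨s, rfl⟩ : ∃ s, K = s + 2 := ⟨K - 2, by omega⟩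
  intro m hm
  obtain ⟨q, rfl⟩ : ∃ q, m = s + q + 2 := ⟨m - (s + 2), by omega⟩
  rw [Rp, coeff_sub, Np, sq_XC, Ep, Pp, Dp, coeff_quad_mul, coeff_quad_mul]
  match q with
  | 0 =>
    simp only [Nat.add_zero]
    rw [prodXC_coeff_sub2, prodXC_coeff_sub2]
    rw [show s + 2 = (s + 1) + 1 from rfl, prodXC_coeff_sub1, prodXC_coeff_sub1,
      prodXC_coeff_top, prodXC_coeff_top, eE1, eE2, eD1, eD2, Cv]
    push_cast
    ring
  | 1 =>
    rw [show s + 2 = (s + 1) + 1 from rfl, prodXC_coeff_sub1, prodXC_coeff_sub1,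
      prodXC_coeff_top, prodXC_coeff_top,
      prodXC_coeff_hi _ _ _ (by omega), prodXC_coeff_hi _ _ _ (by omega), eE1, eD1]
    push_cast
    ring
  | 2 =>
    rw [prodXC_coeff_top, prodXC_coeff_top, prodXC_coeff_hi _ _ _ (by omega),
      prodXC_coeff_hi _ _ _ (by omega), prodXC_coeff_hi _ _ _ (by omega),
      prodXC_coeff_hi _ _ _ (by omega)]
    ring
  | (n + 3) =>
    rw [prodXC_coeff_hi _ _ _ (by omega), prodXC_coeff_hi _ _ _ (by omega),
      prodXC_coeff_hi _ _ _ (by omega), prodXC_coeff_hi _ _ _ (by omega),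
      prodXC_coeff_hi _ _ _ (by omega), prodXC_coeff_hi _ _ _ (by omega)]
    ring

lemma Dp_monic (h : ℝ) (K : ℕ) : (Dp h K).Monic := prodXC_monic _ _

lemma Dp_natDegree (h : ℝ) (K : ℕ) : (Dp h K).natDegree = K := prodXC_natDegree _ _

lemma Dp_degree (h : ℝ) (K : ℕ) : (Dp h K).degree = (K : ℕ) := by
  rw [degree_eq_natDegree (Dp_monic h K).ne_zero, Dp_natDegree]

lemma Dp_eval_pos {h : ℝ} (hh : 0 < h) (K : ℕ) {x : ℝ} (hx : 0 ≤ x) :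
    0 < (Dp h K).eval x := by
  rw [Dp, eval_prod]
  apply Finset.prod_pos
  intro i _
  simp only [eval_add, eval_X, eval_C]
  have : (0:ℝ) ≤ i := Nat.cast_nonneg i
  linarith

lemma Rp_natDegree_le (h : ℝ) {K : ℕ} (hK : 2 ≤ K) : (Rp h K).natDegree ≤ K - 1 :=
  natDegree_le_iff_coeff_eq_zero.mpr fun m hm => Rp_coeff h hK m (by omega)

lemma Rp_degree_lt (h : ℝ) {K : ℕ} (hK : 2 ≤ K) : (Rp h K).degree < ((K : ℕ) : WithBot ℕ) :=
  (degree_lt_iff_coeff_zero _ _).mpr fun m hm => Rp_coeff h hK m hm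

lemma coeff_mul_top {P Q : ℝ[X]} {a b : ℕ} (hP : P.natDegree ≤ a) (hQ : Q.natDegree ≤ b) :
    (P * Q).coeff (a + b) = P.coeff a * Q.coeff b := by
  rw [coeff_mul]
  apply Finset.sum_eq_single_of_mem (a, b) (Finset.HasAntidiagonal.mem_antidiagonal.mpr rfl)
  intro x hx hne
  rw [Finset.HasAntidiagonal.mem_antidiagonal] at hx
  rcases lt_or_ge a x.1 with hlt | hle
  · rw [coeff_eq_zero_of_natDegree_lt (lt_of_le_of_lt hP hlt), zero_mul]
  · have hxx : x.1 + x.2 = a + b := by simpa using hx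
    have hor : x.1 ≠ a ∨ x.2 ≠ b := by
      by_contra hc
      push_neg at hc
      exact hne (Prod.ext hc.1 hc.2)
    have hb : b < x.2 := by rcases hor with h' | h' <;> omega
    rw [coeff_eq_zero_of_natDegree_lt (lt_of_le_of_lt hQ hb), mul_zero]

def shf (K : ℕ) (P : ℝ[X]) : ℝ[X] := P.comp (X - C (K : ℝ))

lemma shf_eval (K : ℕ) (P : ℝ[X]) (x : ℝ) : (shf K P).eval x = P.eval (x - K) := by
  simp [shf, eval_comp]

lemma shf_natDegree (K : ℕ) (P : ℝ[X]) : (shf K P).natDegree = P.natDegree := by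
  rw [shf, natDegree_comp, natDegree_X_sub_C, mul_one]

lemma coeff_shf_top (K : ℕ) (P : ℝ[X]) {n : ℕ} (hP : P.natDegree ≤ n) :
    (shf K P).coeff n = P.coeff n := by
  rcases lt_or_eq_of_le hP with hlt | rfl
  · rw [coeff_eq_zero_of_natDegree_lt (by rwa [shf_natDegree]),
      coeff_eq_zero_of_natDegree_lt hlt]
  · have h1 : (shf K P).coeff P.natDegree = (shf K P).leadingCoeff := by
      rw [leadingCoeff, shf_natDegree]
    rw [h1, coeff_natDegree, shf,
      leadingCoeff_comp (by rw [natDegree_X_sub_C]; omega), (monic_X_sub_C _).leadingCoeff,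
      one_pow, mul_one]

def Qp (h : ℝ) (K : ℕ) : ℝ[X] := Rp h K * shf K (Dp h K) - shf K (Rp h K) * Dp h K

lemma Qp_coeff (h : ℝ) {K : ℕ} (hK : 2 ≤ K) : ∀ m, 2 * K - 1 ≤ m → (Qp h K).coeff m = 0 := by
  intro m hm
  have hR := Rp_natDegree_le h hK
  have hDs : (shf K (Dp h K)).natDegree = K := by rw [shf_natDegree, Dp_natDegree]
  have hRs : (shf K (Rp h K)).natDegree ≤ K - 1 := by rw [shf_natDegree]; exact hR
  have hD := Dp_natDegree h K
  rcases eq_or_lt_of_le hm with hm' | hm'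
  · rw [Qp, coeff_sub, ← hm', show 2 * K - 1 = (K - 1) + K by omega,
      coeff_mul_top hR (le_of_eq hDs), coeff_mul_top hRs (le_of_eq (Dp_natDegree h K)),
      coeff_shf_top K _ (Dp_natDegree h K).le, coeff_shf_top K _ hR]
    ring
  · rw [Qp, coeff_sub,
      coeff_eq_zero_of_natDegree_lt (lt_of_le_of_lt (natDegree_mul_le) (by omega)),
      coeff_eq_zero_of_natDegree_lt (lt_of_le_of_lt (natDegree_mul_le) (by omega)), sub_zero]

def Areal (h : ℝ) (K : ℕ) (j : ℕ) : ℝ :=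
  (Np h K).eval (j : ℝ) / (Dp h K).eval (j : ℝ)
  - (if K ≤ j then (Np h K).eval ((j : ℝ) - K) / (Dp h K).eval ((j : ℝ) - K) else 0)
  - 2 * K * ((j : ℝ) + h)

def rho (h : ℝ) (K : ℕ) (x : ℝ) : ℝ := (Rp h K).eval x / (Dp h K).eval x

lemma NPR (h : ℝ) (K : ℕ) : Np h K = Pp h K * Dp h K + Rp h K := by rw [Rp]; ring

lemma Pp_eval (h : ℝ) (K : ℕ) (x : ℝ) :
    (Pp h K).eval x = x ^ 2 + (2 * h + K) * x + Cv h K := by simp [Pp]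

lemma bsplit {h : ℝ} (hh : 0 < h) (K : ℕ) {x : ℝ} (hx : 0 ≤ x) :
    (Np h K).eval x / (Dp h K).eval x = (Pp h K).eval x + rho h K x := by
  have hd := (Dp_eval_pos hh K hx).ne'
  rw [rho, NPR, eval_add, eval_mul]
  field_simp

lemma Areal_lt {h : ℝ} (hh : 0 < h) {K j : ℕ} (hj : j < K) :
    Areal h K j = (Pp h K).eval (j : ℝ) + rho h K (j : ℝ) - 2 * K * ((j : ℝ) + h) := by
  rw [Areal, if_neg (by omega), bsplit hh K (Nat.cast_nonneg j)]
  ring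

lemma Areal_ge {h : ℝ} (hh : 0 < h) {K j : ℕ} (hj : K ≤ j) :
    Areal h K j = rho h K (j : ℝ) - rho h K ((j : ℝ) - K) := by
  have hx : (0 : ℝ) ≤ (j : ℝ) - K := by
    have h1 : (K : ℝ) ≤ j := Nat.cast_le.mpr hj
    linarith
  rw [Areal, if_pos hj, bsplit hh K (Nat.cast_nonneg j), bsplit hh K hx,
    Pp_eval, Pp_eval]
  ring

lemma psum {h : ℝ} (hh : 0 < h) {K : ℕ} (hK : 1 ≤ K) :
    ∀ N, K ≤ N → ∑ j ∈ range N, Areal h K j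
      = (∑ j ∈ range K, ((Pp h K).eval (j : ℝ) - 2 * K * ((j : ℝ) + h)))
        + ∑ t ∈ range K, rho h K ((N - K + t : ℕ) : ℝ) := by
  intro N
  induction N with
  | zero => omega
  | succ n ih =>
    intro hN
    rcases eq_or_lt_of_le hN with hb | hs
    · -- base : n + 1 = K
      rw [← hb]
      have e1 : ∀ j ∈ range K, Areal h K j
          = ((Pp h K).eval (j : ℝ) - 2 * K * ((j : ℝ) + h)) + rho h K (j : ℝ) := by
        intro j hj
        rw [Areal_lt hh (mem_range.mp hj)]; ring
      rw [sum_congr rfl e1, sum_add_distrib]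
      congr 1
      apply sum_congr rfl
      intro t _
      congr 1
      norm_cast
      omega
    · -- step : K ≤ n
      have hKn : K ≤ n := by omega
      rw [sum_range_succ, ih hKn, Areal_ge hh hKn]
      have hg : ∀ t, ((n + 1 - K + t : ℕ) : ℝ) = ((n - K + (t + 1) : ℕ) : ℝ) := by
        intro t; congr 1; omega
      have e2 : ∑ t ∈ range K, rho h K ((n + 1 - K + t : ℕ) : ℝ)
          = ∑ t ∈ range K, rho h K ((n - K + (t + 1) : ℕ) : ℝ) := by
        exact sum_congr rfl fun t _ => by rw [hg]
      have e3 := sum_range_succ' (fun t => rho h K ((n - K + t : ℕ) : ℝ)) K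
      -- e3 : ∑_{t<K+1} f t = ∑_{t<K} f (t+1) + f 0
      have e4 : ∑ t ∈ range (K + 1), rho h K ((n - K + t : ℕ) : ℝ)
          = ∑ t ∈ range K, rho h K ((n - K + t : ℕ) : ℝ) + rho h K ((n : ℕ) : ℝ) := by
        rw [sum_range_succ, show n - K + K = n by omega]
      have e5 : ((n - K : ℕ) : ℝ) = (n : ℝ) - K := by
        push_cast [Nat.cast_sub hKn]; ring
      rw [e2]
      have : ∑ t ∈ range K, rho h K ((n - K + (t + 1) : ℕ) : ℝ)
          = ∑ t ∈ range K, rho h K ((n - K + t : ℕ) : ℝ) + rho h K ((n : ℕ) : ℝ)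
            - rho h K ((n - K : ℕ) : ℝ) := by
        rw [← e4, e3, show n - K + 0 = n - K by omega]; ring
      rw [this, e5]
      ring

open Filter in
lemma tail_tendsto (h : ℝ) {K : ℕ} (hK : 2 ≤ K) :
    Tendsto (fun N : ℕ => ∑ t ∈ range K, rho h K ((N - K + t : ℕ) : ℝ)) atTop (nhds 0) := by
  have h0 : (0 : ℝ) = ∑ _t ∈ range K, (0 : ℝ) := by simp
  rw [h0]
  apply tendsto_finset_sum
  intro t _
  have h1 : Tendsto (rho h K) atTop (nhds 0) :=
    Polynomial.div_tendsto_zero_of_degree_lt _ _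
      (lt_of_lt_of_le (Rp_degree_lt h hK) (Dp_degree h K).ge)
  have h2 : Tendsto (fun N : ℕ => N - K + t) atTop atTop :=
    tendsto_atTop_mono (fun N => Nat.le_add_right _ _) (tendsto_sub_atTop_nat K)
  exact h1.comp (tendsto_natCast_atTop_atTop.comp h2)

def DD (h : ℝ) (K : ℕ) : ℝ[X] := Dp h K * shf K (Dp h K)

lemma shf_Dp_ne (h : ℝ) {K : ℕ} (hK : 1 ≤ K) : shf K (Dp h K) ≠ 0 := by
  intro hc
  have := shf_natDegree K (Dp h K)
  rw [hc, natDegree_zero, Dp_natDegree] at this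
  omega

lemma DD_degree (h : ℝ) {K : ℕ} (hK : 1 ≤ K) : (DD h K).degree = ((2 * K : ℕ) : WithBot ℕ) := by
  rw [DD, degree_mul, Dp_degree, degree_eq_natDegree (shf_Dp_ne h hK), shf_natDegree,
    Dp_natDegree]
  rw [← Nat.cast_add, show K + K = 2 * K from by omega]

lemma Areal_eq_Q {h : ℝ} (hh : 0 < h) {K j : ℕ} (hK : 1 ≤ K) (hj : K ≤ j) :
    Areal h K j = (Qp h K).eval (j : ℝ) / (DD h K).eval (j : ℝ) := by
  have hKj : (K : ℝ) ≤ (j : ℝ) := Nat.cast_le.mpr hj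
  have d1 := (Dp_eval_pos hh K (Nat.cast_nonneg j)).ne'
  have d2 := (Dp_eval_pos hh K (x := (j : ℝ) - K) (by linarith)).ne'
  rw [Areal_ge hh hj, rho, rho, div_sub_div _ _ d1 d2, DD, eval_mul, shf_eval, Qp, eval_sub,
    eval_mul, eval_mul, shf_eval, shf_eval]
  congr 1
  ring

open Filter in
lemma bound_exists (h : ℝ) {K : ℕ} (hK : 2 ≤ K) :
    ∃ c : ℝ, Tendsto (fun x : ℝ => (X ^ 2 * Qp h K).eval x / (DD h K).eval x) atTop (nhds c) := by
  have hQd : (Qp h K).natDegree ≤ 2 * K - 2 :=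
    natDegree_le_iff_coeff_eq_zero.mpr fun m hm => Qp_coeff h hK m (by omega)
  have hdeg : (X ^ 2 * Qp h K).degree ≤ (DD h K).degree := by
    rw [DD_degree h (by omega)]
    refine le_trans degree_le_natDegree ?_
    have h1 : (X ^ 2 * Qp h K).natDegree ≤ 2 + (2 * K - 2) :=
      le_trans natDegree_mul_le (by rw [natDegree_X_pow]; omega)
    exact_mod_cast (show (X ^ 2 * Qp h K).natDegree ≤ 2 * K by omega)
  rcases lt_or_eq_of_le hdeg with hlt | heq
  · exact ⟨0, Polynomial.div_tendsto_zero_of_degree_lt _ _ hlt⟩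
  · exact ⟨_, Polynomial.div_tendsto_leadingCoeff_div_of_degree_eq _ _ heq⟩

lemma summable_abs_Areal {h : ℝ} (hh : 0 < h) {K : ℕ} (hK : 2 ≤ K) :
    Summable (fun j : ℕ => |Areal h K j|) := by
  obtain ⟨c, hc⟩ := bound_exists h hK
  have habs : Filter.Tendsto (fun x : ℝ => |(X ^ 2 * Qp h K).eval x / (DD h K).eval x|)
      Filter.atTop (nhds |c|) := hc.abs
  have hev := habs.eventually_le_const (lt_add_one |c|)
  rw [Filter.eventually_atTop] at hev
  obtain ⟨x0, hx0⟩ := hev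
  obtain ⟨j0, hj0⟩ : ∃ j0 : ℕ, x0 ≤ (j0 : ℝ) ∧ K ≤ j0 ∧ 1 ≤ j0 := by
    refine ⟨max ⌈x0⌉₊ K + 1, ?_, by omega, by omega⟩
    push_cast
    have h1 := Nat.le_ceil x0
    have h3 : ((⌈x0⌉₊ : ℝ)) ≤ (⌈x0⌉₊ : ℝ) ⊔ (K : ℝ) := le_max_left _ _
    linarith
  rw [← summable_nat_add_iff j0]
  have hs2 : Summable (fun n : ℕ => (|c| + 1) * (1 / ((n : ℝ) + 1) ^ 2)) := by
    apply Summable.mul_left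
    have hbase : Summable (fun n : ℕ => 1 / (n : ℝ) ^ 2) :=
      Real.summable_one_div_nat_pow.mpr (by norm_num)
    have hshift := (_root_.summable_nat_add_iff 1).mpr hbase
    apply hshift.congr
    intro n
    push_cast
    ring
  apply Summable.of_nonneg_of_le (fun n => abs_nonneg _) _ hs2
  intro n
  have hKn : K ≤ n + j0 := by omega
  have hxn : x0 ≤ ((n + j0 : ℕ) : ℝ) := by
    push_cast
    have h4 : (0 : ℝ) ≤ (n : ℝ) := Nat.cast_nonneg n
    linarith [hj0.1]
  have hb := hx0 _ hxn
  rw [Areal_eq_Q hh (by omega) hKn]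
  set x : ℝ := ((n + j0 : ℕ) : ℝ) with hx
  have hx1 : (n : ℝ) + 1 ≤ x := by
    rw [hx]
    push_cast
    have hj1 : (1 : ℝ) ≤ (j0 : ℝ) := by exact_mod_cast hj0.2.2
    linarith
  have hxpos : (0 : ℝ) < (n : ℝ) + 1 := by positivity
  have hq : |(Qp h K).eval x / (DD h K).eval x| * ((n : ℝ) + 1) ^ 2 ≤ |c| + 1 := by
    calc |(Qp h K).eval x / (DD h K).eval x| * ((n : ℝ) + 1) ^ 2
        ≤ |(Qp h K).eval x / (DD h K).eval x| * x ^ 2 := by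
          apply mul_le_mul_of_nonneg_left _ (abs_nonneg _)
          nlinarith
      _ = |(X ^ 2 * Qp h K).eval x / (DD h K).eval x| := by
          rw [eval_mul, eval_pow, eval_X, mul_div_assoc, abs_mul,
            abs_of_nonneg (sq_nonneg x), mul_comm]
      _ ≤ |c| + 1 := hb
  rw [mul_one_div, le_div_iff₀ (by positivity)]
  exact hq

lemma Sconst_eq (h : ℝ) (K : ℕ) :
    ∑ j ∈ range K, ((Pp h K).eval (j : ℝ) - 2 * K * ((j : ℝ) + h))
      = -((6 * h ^ 2 - 6 * h + 1) / 6 * ((K : ℝ) ^ 3 - K)) := by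
  have e : ∀ j : ℕ, (Pp h K).eval (j : ℝ) - 2 * K * ((j : ℝ) + h)
      = (j : ℝ) ^ 2 + (2 * h + (K : ℝ) - 2 * K) * (j : ℝ) + (Cv h K - 2 * K * h) := by
    intro j; rw [Pp_eval]; ring
  simp only [e]
  rw [sum_add_distrib, sum_add_distrib, ← mul_sum, sum_cast_range, sum_sq_range, sum_const,
    card_range, nsmul_eq_mul, Cv]
  ring

open Filter in
lemma tsum_Areal {h : ℝ} (hh : 0 < h) {K : ℕ} (hK : 2 ≤ K) :
    ∑' j : ℕ, Areal h K j = -((6 * h ^ 2 - 6 * h + 1) / 6 * ((K : ℝ) ^ 3 - K)) := by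
  have hs : Summable (Areal h K) := (summable_abs_Areal hh hK).of_abs
  refine tendsto_nhds_unique hs.hasSum.tendsto_sum_nat ?_
  rw [← Sconst_eq h K]
  have h2 : Tendsto (fun N : ℕ =>
      (∑ j ∈ range K, ((Pp h K).eval (j : ℝ) - 2 * K * ((j : ℝ) + h)))
        + ∑ t ∈ range K, rho h K ((N - K + t : ℕ) : ℝ)) atTop
      (nhds ((∑ j ∈ range K, ((Pp h K).eval (j : ℝ) - 2 * K * ((j : ℝ) + h))) + 0)) :=
    tendsto_const_nhds.add (tail_tendsto h hK)
  rw [add_zero] at h2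
  exact h2.congr' (Filter.eventually_atTop.mpr ⟨K, fun N hN => (psum hh (by omega) N hN).symm⟩)

lemma Np_eval (h : ℝ) (K : ℕ) (x : ℝ) :
    (Np h K).eval x = (x + ((K : ℝ) + 1) * h) ^ 2 * ∏ i ∈ range K, (x + ((i : ℝ) + 1)) := by
  simp [Np, Ep, eval_prod]

lemma Dp_eval (h : ℝ) (K : ℕ) (x : ℝ) :
    (Dp h K).eval x = ∏ i ∈ range K, (x + 2 * h + (i : ℝ)) := by
  rw [Dp, eval_prod]
  exact prod_congr rfl fun i _ => by simp; ring

lemma descFac_shift (j K : ℕ) :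
    (((j + K).descFactorial K : ℕ) : ℝ) = ∏ i ∈ range K, ((j : ℝ) + ((i : ℝ) + 1)) := by
  rw [Nat.descFactorial_eq_prod_range, Nat.cast_prod,
    ← prod_range_reflect (fun i => (j : ℝ) + ((i : ℝ) + 1)) K]
  apply prod_congr rfl
  intro i hi
  have hiK : i < K := mem_range.mp hi
  have h1 : i ≤ j + K := by omega
  rw [Nat.cast_sub h1, Nat.cast_sub (by omega : i ≤ K - 1), Nat.cast_sub (by omega : 1 ≤ K)]
  push_cast
  ring

lemma descFac_self {j K : ℕ} (hj : K ≤ j) :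
    ((j.descFactorial K : ℕ) : ℝ) = ∏ i ∈ range K, ((j : ℝ) - K + ((i : ℝ) + 1)) := by
  rw [Nat.descFactorial_eq_prod_range, Nat.cast_prod,
    ← prod_range_reflect (fun i => (j : ℝ) - K + ((i : ℝ) + 1)) K]
  apply prod_congr rfl
  intro i hi
  have hiK : i < K := mem_range.mp hi
  rw [Nat.cast_sub (by omega : i ≤ j), Nat.cast_sub (by omega : i ≤ K - 1),
    Nat.cast_sub (by omega : 1 ≤ K)]
  push_cast
  ring

lemma Areal_eval {h : ℝ} (hh : 0 < h) (K j : ℕ) :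
    Areal h K j =
      (((j : ℝ) + K - K + ((K : ℝ) + 1) * h) * (((j + K).descFactorial K : ℕ) : ℝ))
          * (((j : ℝ) + ((K : ℝ) + 1) * h) / ∏ i ∈ range K, ((j : ℝ) + 2 * h + (i : ℝ)))
      - (((j : ℝ) - K + ((K : ℝ) + 1) * h) * ((j.descFactorial K : ℕ) : ℝ))
          * ((((j - K : ℕ) : ℝ) + ((K : ℝ) + 1) * h)
              / ∏ i ∈ range K, (((j - K : ℕ) : ℝ) + 2 * h + (i : ℝ)))
      - 2 * (K : ℝ) * ((j : ℝ) + h) := by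
  have hD1 : (0:ℝ) < ∏ i ∈ range K, ((j : ℝ) + 2 * h + (i : ℝ)) := by
    rw [← Dp_eval]; exact Dp_eval_pos hh K (Nat.cast_nonneg j)
  rcases lt_or_ge j K with hj | hj
  · have hdf : (j.descFactorial K : ℕ) = 0 := Nat.descFactorial_eq_zero_iff_lt.mpr hj
    rw [Areal, if_neg (by omega), hdf, descFac_shift, Np_eval, Dp_eval]
    push_cast
    field_simp
    ring
  · have hcast : ((j - K : ℕ) : ℝ) = (j : ℝ) - K := by
      rw [Nat.cast_sub hj]
    have hD2 : (0:ℝ) < ∏ i ∈ range K, (((j - K : ℕ) : ℝ) + 2 * h + (i : ℝ)) := by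
      rw [hcast, ← Dp_eval]
      apply Dp_eval_pos hh K
      have : (K : ℝ) ≤ j := Nat.cast_le.mpr hj
      linarith
    rw [Areal, if_pos hj, descFac_shift, descFac_self hj, Np_eval, Np_eval, Dp_eval, Dp_eval,
      ← hcast]
    field_simp
    ring

lemma Areal_one {h : ℝ} (hh : 0 < h) (j : ℕ) : Areal h 1 j = 0 := by
  have hd1 : (j : ℝ) + 2 * h ≠ 0 := by positivity
  rcases Nat.eq_zero_or_pos j with rfl | hj
  · rw [Areal, if_neg (by omega)]
    simp only [Np_eval, Dp_eval, prod_range_one, Nat.cast_zero, Nat.cast_one]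
    field_simp
    ring
  · have hj1 : (1 : ℕ) ≤ j := hj
    have hcast : ((j - 1 : ℕ) : ℝ) = (j : ℝ) - 1 := by rw [Nat.cast_sub hj1]; norm_num
    have hd2 : (j : ℝ) - 1 + 2 * h ≠ 0 := by
      have : (1 : ℝ) ≤ j := by exact_mod_cast hj1
      nlinarith
    rw [Areal, if_pos hj1]
    simp only [Np_eval, Dp_eval, prod_range_one, Nat.cast_zero, Nat.cast_one, hcast, add_zero]
    rw [div_sub_div _ _ hd1 hd2, sub_eq_zero, div_eq_iff (mul_ne_zero hd1 hd2)]
    ring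


lemma dev_apply {h : ℝ} (hh : 0 < h) {k : ℤ} (hk : 0 < k) (j : ℕ) :
    dev h k (-k) ((X : Polynomial ℂ) ^ j)
      = ((Areal h k.toNat j : ℝ) : ℂ) • (X : Polynomial ℂ) ^ j := by
  have hkc : (k : ℂ) = (k.toNat : ℂ) := by exact_mod_cast (Int.toNat_of_nonneg hk.le).symm
  have hnk : -k < 0 := by omega
  have e1 := Lop_apply_neg h hnk j
  rw [neg_neg] at e1
  have e2 := Lop_apply_nonneg h hk.le (j + k.toNat)
  rw [Nat.add_sub_cancel] at e2
  have e3 := Lop_apply_nonneg h hk.le j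
  have e4 := Lop_apply_neg h hnk (j - k.toNat)
  rw [neg_neg] at e4
  have e5 := Lop_apply_nonneg h (le_refl (0 : ℤ)) j
  simp only [Int.toNat_zero, Nat.descFactorial_zero, Nat.cast_one, Nat.sub_zero, Int.cast_zero,
    mul_one] at e5
  simp only [dev, LinearMap.sub_apply, Module.End.mul_apply, LinearMap.smul_apply]
  rw [e1, map_smul, e2, e3, map_smul, e4, show k + -k = 0 from by ring, e5,
    smul_smul, smul_smul, smul_smul]
  rcases le_or_gt k.toNat j with hj | hj
  · rw [Nat.sub_add_cancel hj, ← sub_smul, ← sub_smul]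
    congr 1
    rw [Areal_eval hh k.toNat j]
    push_cast
    rw [hkc]
    ring
  · have h0 : j.descFactorial k.toNat = 0 := Nat.descFactorial_eq_zero_iff_lt.mpr hj
    rw [h0]
    simp only [Nat.cast_zero, mul_zero, zero_mul, zero_smul, sub_zero]
    rw [← sub_smul]
    congr 1
    rw [Areal_eval hh k.toNat j, h0]
    push_cast
    rw [hkc]
    ring

lemma adiag_eq {h : ℝ} (hh : 0 < h) {k : ℤ} (hk : 0 < k) (j : ℕ) :
    adiag h k j = ((Areal h k.toNat j : ℝ) : ℂ) := by
  rw [adiag, dev_apply hh hk j, coeff_smul, coeff_X_pow, if_pos rfl, smul_eq_mul, mul_one]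

lemma dev_antisymm (h : ℝ) (n m : ℤ) : dev h n m = -dev h m n := by
  have hc : ((n - m : ℤ) : ℂ) = -((m - n : ℤ) : ℂ) := by push_cast; ring
  rw [dev, dev, hc, add_comm m n]
  module

lemma main_pos (h : ℝ) (hh : 0 < h) (k : ℤ) (hk : 0 < k) :
    (∀ j : ℕ, (dev h k (-k)) ((X : Polynomial ℂ) ^ j) = adiag h k j • (X : Polynomial ℂ) ^ j) ∧
      Summable (fun j : ℕ => ‖adiag h k j‖) ∧
      ∑' j : ℕ, adiag h k j
        = -(((((6 * h ^ 2 - 6 * h + 1) / 6) * ((k : ℝ) ^ 3 - (k : ℝ))) : ℝ) : ℂ) := by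
  have hA : ∀ j, adiag h k j = ((Areal h k.toNat j : ℝ) : ℂ) := fun j => adiag_eq hh hk j
  have hKr : ((k.toNat : ℕ) : ℝ) = ((k : ℤ) : ℝ) := by
    exact_mod_cast Int.toNat_of_nonneg hk.le
  have key : Summable (fun j : ℕ => |Areal h k.toNat j|) ∧
      ∑' j : ℕ, Areal h k.toNat j
        = -((6 * h ^ 2 - 6 * h + 1) / 6 * (((k.toNat : ℕ) : ℝ) ^ 3 - ((k.toNat : ℕ) : ℝ))) := by
    rcases eq_or_lt_of_le (by omega : 1 ≤ k.toNat) with h1 | h2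
    · constructor
      · apply summable_zero.congr
        intro j
        rw [← h1, Areal_one hh j, abs_zero]
      · rw [tsum_congr (fun j => by rw [← h1, Areal_one hh j] : ∀ j, Areal h k.toNat j = 0),
          tsum_zero, ← h1]
        norm_num
    · exact ⟨summable_abs_Areal hh h2, tsum_Areal hh h2⟩
  refine ⟨fun j => by rw [dev_apply hh hk j, hA j], ?_, ?_⟩
  · apply key.1.congr
    intro j
    rw [hA j, Complex.norm_real, Real.norm_eq_abs]
  · rw [tsum_congr hA, ← Complex.ofReal_tsum, key.2, hKr, Complex.ofReal_neg]

theorem diag_main (h : ℝ) (hh : 0 < h) (k : ℤ) :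
    (∀ j : ℕ, (dev h k (-k)) ((X : Polynomial ℂ) ^ j) = adiag h k j • (X : Polynomial ℂ) ^ j) ∧
      Summable (fun j : ℕ => ‖adiag h k j‖) ∧
      ∑' j : ℕ, adiag h k j
        = -(((((6 * h ^ 2 - 6 * h + 1) / 6) * ((k : ℝ) ^ 3 - (k : ℝ))) : ℝ) : ℂ) := by
  rcases lt_trichotomy k 0 with hk | rfl | hk
  · obtain ⟨d', s', t'⟩ := main_pos h hh (-k) (by omega)
    have hanti : dev h k (-k) = -dev h (-k) (- -k) := by
      rw [neg_neg, dev_antisymm h k (-k)]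
    have hAneg : ∀ j, adiag h k j = -adiag h (-k) j := by
      intro j
      rw [adiag, adiag, hanti]
      simp
    refine ⟨fun j => ?_, ?_, ?_⟩
    · rw [hanti]
      simp only [LinearMap.neg_apply, d' j, hAneg j, neg_smul]
    · apply s'.congr
      intro j
      rw [hAneg j, norm_neg]
    · rw [tsum_congr hAneg, tsum_neg, t']
      push_cast
      ring
  · have hdev : dev h 0 (-0) = 0 := by
      rw [neg_zero, dev]
      simp
    have hA0 : ∀ j : ℕ, adiag h 0 j = 0 := by
      intro j
      rw [adiag, hdev]
      simp
    refine ⟨fun j => by rw [hdev, hA0 j]; simp, ?_, ?_⟩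
    · apply summable_zero.congr
      intro j
      rw [hA0 j, norm_zero]
    · rw [tsum_congr hA0, tsum_zero]
      norm_num
  · exact main_pos h hh k hk


/-- For `h > 0` and every `k ∈ ℤ`, the deviation `A_{k,−k}` is diagonal on
monomials, its diagonal eigenvalues `a_k(j)` form an absolutely convergent series with
`Σ_j a_k(j) = −((6h²−6h+1)/6)·(k³−k)`; moreover for `i+j ≠ 0` every diagonal entry of
`A_{i,j}` vanishes, so `Tr A_{i,j} = α_{i,j}`. -/
theorem stmt0 (h : ℝ) (hh : 0 < h) :
    (∀ k : ℤ,
      (∀ j : ℕ, (dev h k (-k)) ((X : Polynomial ℂ) ^ j) = adiag h k j • (X : Polynomial ℂ) ^ j) ∧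
      Summable (fun j : ℕ => ‖adiag h k j‖) ∧
      ∑' j : ℕ, adiag h k j
        = -(((((6 * h ^ 2 - 6 * h + 1) / 6) * ((k : ℝ) ^ 3 - (k : ℝ))) : ℝ) : ℂ)) ∧
    (∀ i j : ℤ, i + j ≠ 0 → ∀ l : ℕ,
      ((dev h i j) ((X : Polynomial ℂ) ^ l)).coeff l = 0) :=
  ⟨diag_main h hh, fun i j hij l => offdiag h i j hij l⟩
end
end

section
/- Assume 2h is not a nonpositive integer and h ≠ 1/2, and set q_R = 1/(2h−1). Then the operators D and F on ℂ[z] satisfy the Lobachevskii–Berezin relations [FD, DF] = 0 and [D, F] = q_R·(Id − DF)(Id − FD). -/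
open Polynomial

noncomputable section

lemma ndenom (h : ℝ) (hnd : ∀ n : ℕ, 2 * h ≠ -(n : ℝ)) (n : ℕ) :
    ((n : ℂ) + 2 * (h : ℂ)) ≠ 0 := by
  have he : ((n : ℂ) + 2 * (h : ℂ)) = (((n : ℝ) + 2 * h : ℝ) : ℂ) := by push_cast; ring
  rw [he, Complex.ofReal_ne_zero]
  have := hnd n
  intro hc; apply this; linarith

lemma Fop_pow (h : ℝ) (n : ℕ) :
    Fop h ((X : Polynomial ℂ) ^ n)
      = (((n : ℂ) + 2 * (h : ℂ))⁻¹) • (X : Polynomial ℂ) ^ (n + 1) := by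
  have hb : (X : Polynomial ℂ) ^ n = Polynomial.basisMonomials ℂ n := by
    simp [Polynomial.coe_basisMonomials, Polynomial.X_pow_eq_monomial]
  rw [Fop, hb, Module.Basis.constr_basis]

lemma der_pow (n : ℕ) :
    der ((X : Polynomial ℂ) ^ (n + 1)) = ((n : ℂ) + 1) • (X : Polynomial ℂ) ^ n := by
  show Polynomial.derivative _ = _
  rw [Polynomial.derivative_X_pow]
  simp [Polynomial.smul_eq_C_mul]

lemma der_one' : der ((X : Polynomial ℂ) ^ 0) = 0 := by
  show Polynomial.derivative _ = _
  simp

lemma der_one : der (1 : Polynomial ℂ) = 0 := by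
  show Polynomial.derivative _ = _
  simp

lemma der_X : der (X : Polynomial ℂ) = 1 := by
  show Polynomial.derivative _ = _
  simp

set_option maxHeartbeats 1000000 in
/-- The Lobachevskii–Berezin relations `[FD, DF] = 0` and
`[D, F] = q_R·(Id − DF)(Id − FD)` with `q_R = 1/(2h−1)`. -/
theorem stmt6 (h : ℝ) (hnd : ∀ n : ℕ, 2 * h ≠ -(n : ℝ)) (hh : h ≠ 1 / 2) :
    (Fop h * der) * (der * Fop h) - (der * Fop h) * (Fop h * der) = 0 ∧
    der * Fop h - Fop h * der
      = (((1 / (2 * h - 1)) : ℝ) : ℂ) • ((1 - der * Fop h) * (1 - Fop h * der)) := by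
  have hb : ∀ n : ℕ, Polynomial.basisMonomials ℂ n = (X : Polynomial ℂ) ^ n := by
    intro n
    simp [Polynomial.coe_basisMonomials, Polynomial.X_pow_eq_monomial]
  have h2h1 : (2 * (h : ℂ) - 1) ≠ 0 := by
    have : ((2 * h - 1 : ℝ) : ℂ) ≠ 0 := by
      rw [Complex.ofReal_ne_zero]; intro hc; apply hh; linarith
    simpa [Complex.ofReal_sub, Complex.ofReal_mul] using this
  constructor
  · apply (Polynomial.basisMonomials ℂ).ext
    intro n
    rw [hb]
    rcases n with _ | n
    · simp only [Module.End.mul_apply, LinearMap.sub_apply, LinearMap.zero_apply, Fop_pow,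
        der_pow, der_one', map_smul, map_zero, smul_zero, sub_zero, zero_smul, sub_self]
    · have hd1 := ndenom h hnd n
      have hd2 := ndenom h hnd (n + 1)
      simp only [Module.End.mul_apply, LinearMap.zero_apply, der_pow, Fop_pow, map_smul,
        smul_smul, LinearMap.sub_apply]
      rw [sub_eq_zero]
      push_cast
      ring
  · apply (Polynomial.basisMonomials ℂ).ext
    intro n
    rw [hb]
    rcases n with _ | n
    · have hd1 := ndenom h hnd 0
      simp only [Module.End.mul_apply, LinearMap.sub_apply, Module.End.one_apply,
        LinearMap.smul_apply, Fop_pow, der_pow, der_one', map_smul, map_zero, map_sub,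
        smul_zero, sub_zero, smul_smul, zero_smul, smul_sub]
      have hq : ((1 / (2 * h - 1) : ℝ) : ℂ) = 1 / (2 * (h : ℂ) - 1) := by push_cast; ring
      rw [hq]
      have hd1' : (2 * (h : ℂ)) ≠ 0 := by
        have := ndenom h hnd 0; simpa using this
      have hh0 : (h : ℂ) ≠ 0 := by intro h0; apply hd1'; rw [h0]; ring
      match_scalars <;> push_cast <;> field_simp <;> ring
    · have hd1 := ndenom h hnd n
      have hd2 := ndenom h hnd (n + 1)
      simp only [Module.End.mul_apply, der_pow, Fop_pow, map_smul, smul_smul,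
        LinearMap.sub_apply, Module.End.one_apply, LinearMap.smul_apply, map_sub]
      have hq : ((1 / (2 * h - 1) : ℝ) : ℂ) = 1 / (2 * (h : ℂ) - 1) := by push_cast; ring
      rw [hq]
      have hd2' : ((n : ℂ) + 1 + 2 * (h : ℂ)) ≠ 0 := by push_cast at hd2; convert hd2 using 2
      match_scalars <;> push_cast <;> field_simp <;> ring
end
end

section
/- Let h > 0. Then ⟨F p, q⟩ = ⟨p, D q⟩ and ⟨D p, q⟩ = ⟨p, F q⟩ for all p, q ∈ ℂ[z] (F* = D and D* = F), and D and F are bounded: with C = max(1, 1/(2h))^{1/2} one has ‖D p‖ ≤ C·‖p‖ and ‖F p‖ ≤ C·‖p‖ for all p ∈ ℂ[z]. -/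
open Polynomial

noncomputable section

/-!
The weights satisfy `w (n+1) = (n+1)(n+2h) w n`, which is exactly what makes
`F zⁿ = zⁿ⁺¹/(n+2h)` adjoint to `D zⁿ⁺¹ = (n+1) zⁿ`. Adjointness then gives
`‖D p‖² = ⟨p, F D p⟩` and `‖F p‖² = ⟨p, D F p⟩`, and `F D`, `D F` are diagonal on monomials
with eigenvalues `n/(n-1+2h)` and `(n+1)/(n+2h)`, all bounded by `max 1 (1/(2h))`.
-/

section VermaAdjoint

variable {h : ℝ}

lemma wgt_succ (n : ℕ) : wgt h (n + 1) = ((n : ℝ) + 1) * (n + 2 * h) * wgt h n := by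
  simp only [wgt, Nat.factorial_succ, Finset.prod_range_succ]
  push_cast
  ring

lemma wgt_nonneg (hh : 0 ≤ h) (n : ℕ) : 0 ≤ wgt h n :=
  mul_nonneg (Nat.cast_nonneg _) (Finset.prod_nonneg fun _ _ => by positivity)

lemma ip_eq_sum_of_support_subset {p : ℂ[X]} (q : ℂ[X]) {s : Finset ℕ} (hs : p.support ⊆ s) :
    ip h p q = ∑ n ∈ s, starRingEnd ℂ (p.coeff n) * q.coeff n * (wgt h n : ℂ) :=
  Finset.sum_subset hs fun n _ hn => by simp [notMem_support_iff.mp hn]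

lemma conj_ip (p q : ℂ[X]) : starRingEnd ℂ (ip h q p) = ip h p q := by
  rw [ip_eq_sum_of_support_subset p (Finset.subset_union_left (s₂ := p.support)),
    ip_eq_sum_of_support_subset q (Finset.subset_union_right (s₁ := q.support)), map_sum]
  refine Finset.sum_congr rfl fun n _ => ?_
  simp only [map_mul, Complex.conj_conj, Complex.conj_ofReal]
  ring

lemma Fop_monomial (n : ℕ) (a : ℂ) :
    Fop h (monomial n a) = a • (((n : ℂ) + 2 * h)⁻¹ • X ^ (n + 1)) := by
  have hbasis : monomial n a = a • basisMonomials ℂ n := by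
    simp [coe_basisMonomials, smul_monomial]
  rw [hbasis, map_smul, Fop, Module.Basis.constr_basis]

lemma coeff_Fop_zero (p : ℂ[X]) : (Fop h p).coeff 0 = 0 := by
  induction p using Polynomial.induction_on' with
  | add p q hp hq => simp [hp, hq]
  | monomial n a => simp [Fop_monomial, coeff_X_pow]

lemma coeff_Fop_succ (p : ℂ[X]) (k : ℕ) :
    (Fop h p).coeff (k + 1) = (((k : ℝ) + 2 * h)⁻¹ : ℝ) * p.coeff k := by
  induction p using Polynomial.induction_on' with
  | add p q hp hq => simp [hp, hq, mul_add]
  | monomial n a =>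
    by_cases hnk : n = k
    · subst hnk
      simp [Fop_monomial, mul_comm]
    · simp [Fop_monomial, coeff_X_pow, coeff_monomial, hnk, Ne.symm hnk]

lemma support_Fop_subset (p : ℂ[X]) : (Fop h p).support ⊆ Finset.range (p.natDegree + 2) := by
  intro n hn
  rw [Finset.mem_range]
  by_contra! hlarge
  obtain ⟨k, rfl⟩ : ∃ k, n = k + 1 := ⟨n - 1, by omega⟩
  rw [mem_support_iff, coeff_Fop_succ, p.coeff_eq_zero_of_natDegree_lt (by omega),
    mul_zero] at hn
  exact hn rfl

lemma ip_Fop_left (hh : 0 < h) (p q : ℂ[X]) : ip h (Fop h p) q = ip h p (der q) := by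
  rw [ip_eq_sum_of_support_subset q (support_Fop_subset p),
    ip_eq_sum_of_support_subset (der q) (supp_subset_range (Nat.lt_succ_self _)),
    Finset.sum_range_succ', coeff_Fop_zero, map_zero, zero_mul, zero_mul, add_zero]
  refine Finset.sum_congr rfl fun m _ => ?_
  have hne : (m : ℂ) + 2 * h ≠ 0 := by exact_mod_cast (by positivity : (0 : ℝ) < m + 2 * h).ne'
  rw [coeff_Fop_succ, der, coeff_derivative, map_mul, Complex.conj_ofReal, wgt_succ]
  push_cast
  field_simp

lemma ip_der_left (hh : 0 < h) (p q : ℂ[X]) : ip h (der p) q = ip h p (Fop h q) := by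
  rw [← conj_ip, ← ip_Fop_left hh, conj_ip]

lemma re_ip_le_of_coeff_eq_mul (hh : 0 ≤ h) {p r : ℂ[X]} {c : ℕ → ℝ} {C : ℝ}
    (hr : ∀ n, r.coeff n = c n * p.coeff n) (hc : ∀ n, c n ≤ C) :
    (ip h p r).re ≤ C * (ip h p p).re := by
  simp only [ip, hr, Complex.re_sum, Finset.mul_sum]
  refine Finset.sum_le_sum fun n _ => ?_
  have hsq : starRingEnd ℂ (p.coeff n) * p.coeff n = (Complex.normSq (p.coeff n) : ℂ) := by
    rw [mul_comm, Complex.mul_conj]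
  rw [mul_left_comm, hsq]
  simp only [← Complex.ofReal_mul, Complex.ofReal_re, mul_assoc]
  exact mul_le_mul_of_nonneg_right (hc n)
    (mul_nonneg (Complex.normSq_nonneg _) (wgt_nonneg hh n))

lemma nrm_le_of_re_ip_le {p q : ℂ[X]} {C : ℝ} (hC : 0 ≤ C)
    (hle : (ip h q q).re ≤ C * (ip h p p).re) : nrm h q ≤ Real.sqrt C * nrm h p := by
  rw [nrm, nrm, ← Real.sqrt_mul hC]
  exact Real.sqrt_le_sqrt hle

lemma succ_div_le_max (hh : 0 < h) (m : ℕ) :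
    ((m : ℝ) + 1) / (m + 2 * h) ≤ max 1 (1 / (2 * h)) := by
  rw [div_le_iff₀ (by positivity)]
  rcases le_total 1 (2 * h) with hle | hle
  · nlinarith [le_max_left 1 (1 / (2 * h))]
  · have hmax : max 1 (1 / (2 * h)) = 1 / (2 * h) := max_eq_right (by
      rw [le_div_iff₀ (by positivity)]; linarith)
    rw [hmax, div_mul_eq_mul_div, le_div_iff₀ (by positivity)]
    nlinarith [(Nat.cast_nonneg m : (0 : ℝ) ≤ m)]

lemma coeff_der_Fop (p : ℂ[X]) (n : ℕ) :
    (der (Fop h p)).coeff n = (((n : ℝ) + 1) / (n + 2 * h) : ℝ) * p.coeff n := by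
  rw [der, coeff_derivative, coeff_Fop_succ]
  push_cast
  ring

lemma coeff_Fop_der (p : ℂ[X]) (n : ℕ) :
    (Fop h (der p)).coeff n = ((n : ℝ) / (n - 1 + 2 * h) : ℝ) * p.coeff n := by
  cases n with
  | zero => simp [coeff_Fop_zero]
  | succ m =>
    rw [coeff_Fop_succ, der, coeff_derivative]
    push_cast
    ring

lemma nrm_Fop_le (hh : 0 < h) (p : ℂ[X]) :
    nrm h (Fop h p) ≤ Real.sqrt (max 1 (1 / (2 * h))) * nrm h p := by
  refine nrm_le_of_re_ip_le (le_max_of_le_left zero_le_one) ?_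
  rw [ip_Fop_left hh]
  exact re_ip_le_of_coeff_eq_mul hh.le (coeff_der_Fop p) (succ_div_le_max hh)

lemma nrm_der_le (hh : 0 < h) (p : ℂ[X]) :
    nrm h (der p) ≤ Real.sqrt (max 1 (1 / (2 * h))) * nrm h p := by
  refine nrm_le_of_re_ip_le (le_max_of_le_left zero_le_one) ?_
  rw [ip_der_left hh]
  refine re_ip_le_of_coeff_eq_mul hh.le (coeff_Fop_der p) fun n => ?_
  cases n with
  | zero => simp
  | succ m => simpa using succ_div_le_max hh m

end VermaAdjoint

/-- For `h > 0`: `F* = D`, `D* = F` with respect to the inner product of the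
unitarizable Verma module, and `D`, `F` are bounded with norm constant
`C = max(1, 1/(2h))^{1/2}`. -/
theorem stmt7 (h : ℝ) (hh : 0 < h) :
    (∀ p q : Polynomial ℂ, ip h ((Fop h) p) q = ip h p (der q)) ∧
    (∀ p q : Polynomial ℂ, ip h (der p) q = ip h p ((Fop h) q)) ∧
    (∀ p : Polynomial ℂ, nrm h (der p) ≤ Real.sqrt (max 1 (1 / (2 * h))) * nrm h p) ∧
    (∀ p : Polynomial ℂ, nrm h ((Fop h) p) ≤ Real.sqrt (max 1 (1 / (2 * h))) * nrm h p) :=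
  ⟨ip_Fop_left hh, ip_der_left hh, nrm_der_le hh, nrm_Fop_le hh⟩
end
end

section
/- Let h > 0. Then for every n ∈ ℤ and all p, q ∈ ℂ[z], ⟨L_n p, q⟩ = ⟨p, L_{−n} q⟩ (the q_R-conformal symmetries satisfy L_n* = L_{−n} with respect to the inner product of the unitarizable Verma module). -/
open Polynomial

noncomputable section

lemma Lop_apply_pow (h : ℝ) (k : ℤ) (a : ℕ) :
    Lop h k ((X : Polynomial ℂ) ^ a) =
      if 0 ≤ k then
        ((((a : ℂ) - (k : ℂ)) + ((k : ℂ) + 1) * (h : ℂ)) * (a.descFactorial k.toNat : ℂ)) •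
          (X : Polynomial ℂ) ^ (a - k.toNat)
      else
        (((a : ℂ) + (((-k).toNat : ℂ) + 1) * (h : ℂ)) /
            ∏ j ∈ Finset.range (-k).toNat, ((a : ℂ) + 2 * (h : ℂ) + (j : ℂ))) •
          (X : Polynomial ℂ) ^ (a + (-k).toNat) := by
  have e : (X : Polynomial ℂ) ^ a = (Polynomial.basisMonomials ℂ) a := by
    simp [Polynomial.coe_basisMonomials, Polynomial.X_pow_eq_monomial]
  rw [e, Lop, Module.Basis.constr_basis]

lemma ip_eq_sum (h : ℝ) (p q : Polynomial ℂ) (s : Finset ℕ) (hs : p.support ⊆ s) :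
    ip h p q = ∑ n ∈ s, (starRingEnd ℂ) (p.coeff n) * q.coeff n * ((wgt h n : ℝ) : ℂ) := by
  rw [ip]
  exact Finset.sum_subset hs fun x _ hx => by
    simp [Polynomial.notMem_support_iff.mp hx]

lemma ip_add_left (h : ℝ) (p₁ p₂ q : Polynomial ℂ) :
    ip h (p₁ + p₂) q = ip h p₁ q + ip h p₂ q := by
  rw [ip_eq_sum h (p₁ + p₂) q (p₁.support ∪ p₂.support) (Polynomial.support_add),
    ip_eq_sum h p₁ q (p₁.support ∪ p₂.support) Finset.subset_union_left,
    ip_eq_sum h p₂ q (p₁.support ∪ p₂.support) Finset.subset_union_right,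
    ← Finset.sum_add_distrib]
  exact Finset.sum_congr rfl fun n _ => by simp [Polynomial.coeff_add]; ring

lemma ip_smul_left (h : ℝ) (c : ℂ) (p q : Polynomial ℂ) :
    ip h (c • p) q = (starRingEnd ℂ) c * ip h p q := by
  rw [ip_eq_sum h (c • p) q p.support (Polynomial.support_smul c p), ip, Finset.mul_sum]
  exact Finset.sum_congr rfl fun n _ => by
    simp [Polynomial.coeff_smul, smul_eq_mul, map_mul]; ring

lemma ip_add_right (h : ℝ) (p q₁ q₂ : Polynomial ℂ) :
    ip h p (q₁ + q₂) = ip h p q₁ + ip h p q₂ := by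
  rw [ip, ip, ip, ← Finset.sum_add_distrib]
  exact Finset.sum_congr rfl fun n _ => by simp [Polynomial.coeff_add]; ring

lemma ip_smul_right (h : ℝ) (c : ℂ) (p q : Polynomial ℂ) :
    ip h p (c • q) = c * ip h p q := by
  rw [ip, ip, Finset.mul_sum]
  exact Finset.sum_congr rfl fun n _ => by
    simp [Polynomial.coeff_smul, smul_eq_mul]; ring

lemma ip_conj (h : ℝ) (p q : Polynomial ℂ) :
    ip h p q = (starRingEnd ℂ) (ip h q p) := by
  rw [ip_eq_sum h p q (p.support ∪ q.support) Finset.subset_union_left,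
    ip_eq_sum h q p (p.support ∪ q.support) Finset.subset_union_right, map_sum]
  exact Finset.sum_congr rfl fun n _ => by
    simp only [map_mul, Complex.conj_conj, Complex.conj_ofReal]; ring

lemma ip_pow_pow (h : ℝ) (a b : ℕ) :
    ip h ((X : Polynomial ℂ) ^ a) ((X : Polynomial ℂ) ^ b) =
      if a = b then ((wgt h a : ℝ) : ℂ) else 0 := by
  rw [ip, Polynomial.support_X_pow a]
  rcases eq_or_ne a b with rfl | hab
  · simp [Polynomial.coeff_X_pow]
  · simp [Polynomial.coeff_X_pow, hab, Ne.symm hab]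

lemma wgt_add (h : ℝ) (b m : ℕ) :
    wgt h (b + m) =
      ((b + m).descFactorial m : ℝ) * wgt h b * ∏ j ∈ Finset.range m, (2 * h + b + j) := by
  have h1 : ((b + m).factorial : ℝ) = ((b + m).descFactorial m : ℝ) * b.factorial := by
    rw [Nat.add_descFactorial_eq_ascFactorial]
    rw_mod_cast [← Nat.factorial_mul_ascFactorial]
    ring
  rw [wgt, wgt, Finset.prod_range_add, h1]
  have h2 : ∏ j ∈ Finset.range m, (2 * h + ((b + j : ℕ) : ℝ)) =
      ∏ j ∈ Finset.range m, (2 * h + b + j) := by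
    exact Finset.prod_congr rfl fun j _ => by push_cast; ring
  rw [h2]; ring

lemma prodR_pos (h : ℝ) (hh : 0 < h) (b m : ℕ) :
    0 < ∏ j ∈ Finset.range m, (2 * h + (b : ℝ) + j) :=
  Finset.prod_pos fun j _ => by positivity

lemma prodC_eq (h : ℝ) (b m : ℕ) :
    (∏ j ∈ Finset.range m, ((b : ℂ) + 2 * (h : ℂ) + (j : ℂ))) =
      ((∏ j ∈ Finset.range m, (2 * h + (b : ℝ) + j) : ℝ) : ℂ) := by
  push_cast
  exact Finset.prod_congr rfl fun j _ => by ring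

lemma key (h : ℝ) (hh : 0 < h) (m a b : ℕ) :
    ip h (Lop h (m : ℤ) ((X : Polynomial ℂ) ^ a)) ((X : Polynomial ℂ) ^ b) =
      ip h ((X : Polynomial ℂ) ^ a) (Lop h (-(m : ℤ)) ((X : Polynomial ℂ) ^ b)) := by
  rcases Nat.eq_zero_or_pos m with rfl | hm
  · rw [Lop_apply_pow, Lop_apply_pow]
    simp only [Nat.cast_zero, neg_zero, Int.cast_zero, if_pos le_rfl, Int.toNat_zero,
      Nat.descFactorial_zero, Nat.cast_one, mul_one, Nat.sub_zero, sub_zero, zero_add, one_mul]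
    rw [ip_smul_left, ip_smul_right, ip_pow_pow]
    by_cases hab : a = b
    · subst hab; simp [map_add, Complex.conj_ofReal]
    · simp [hab]
  have hk1 : (0 : ℤ) ≤ (m : ℤ) := Int.natCast_nonneg m
  have hk2 : ¬ (0 : ℤ) ≤ -(m : ℤ) := by omega
  rw [Lop_apply_pow, Lop_apply_pow, if_pos hk1, if_neg hk2]
  simp only [Int.toNat_natCast, neg_neg, Int.cast_natCast]
  rw [ip_smul_left, ip_smul_right, ip_pow_pow, ip_pow_pow]
  have hc : (starRingEnd ℂ) ((((a : ℂ) - (m : ℂ)) + ((m : ℂ) + 1) * (h : ℂ)) *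
      (a.descFactorial m : ℂ)) =
      (((a : ℂ) - (m : ℂ)) + ((m : ℂ) + 1) * (h : ℂ)) * (a.descFactorial m : ℂ) := by
    simp [map_mul, map_sub, map_add, Complex.conj_ofReal]
  rw [hc]
  by_cases hab : a = b + m
  · subst hab
    rw [Nat.add_sub_cancel, if_pos rfl, if_pos rfl, wgt_add h b m, prodC_eq h b m]
    have hP : ((∏ j ∈ Finset.range m, (2 * h + (b : ℝ) + j) : ℝ) : ℂ) ≠ 0 :=
      Complex.ofReal_ne_zero.mpr (ne_of_gt (prodR_pos h hh b m))
    rw [div_mul_eq_mul_div, eq_div_iff hP]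
    push_cast
    ring
  · rw [if_neg hab, mul_zero]
    by_cases hma : m ≤ a
    · rw [if_neg (by omega : ¬ a - m = b), mul_zero]
    · rw [Nat.descFactorial_of_lt (by omega)]
      simp

lemma stmt_pos (h : ℝ) (hh : 0 < h) (m : ℕ) (p q : Polynomial ℂ) :
    ip h (Lop h (m : ℤ) p) q = ip h p (Lop h (-(m : ℤ)) q) := by
  induction p using Polynomial.induction_on' with
  | add p₁ p₂ h1 h2 => rw [map_add, ip_add_left, ip_add_left, h1, h2]
  | monomial n c =>
    induction q using Polynomial.induction_on' with
    | add q₁ q₂ g1 g2 => rw [map_add, ip_add_right, ip_add_right, g1, g2]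
    | monomial n' c' =>
      rw [← Polynomial.smul_X_eq_monomial, ← Polynomial.smul_X_eq_monomial, map_smul, map_smul,
        ip_smul_left, ip_smul_left, ip_smul_right, ip_smul_right, key h hh m n n']

/-- For `h > 0`, `L_n* = L_{−n}` with respect to the inner product of the
unitarizable Verma module. -/
theorem stmt11 (h : ℝ) (hh : 0 < h) :
    ∀ n : ℤ, ∀ p q : Polynomial ℂ, ip h ((Lop h n) p) q = ip h p ((Lop h (-n)) q) := by
  intro n p q
  rcases n with m | m
  · exact stmt_pos h hh m p q
  · have e1 : (Int.negSucc m) = -((m + 1 : ℕ) : ℤ) := by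
      simp [Int.negSucc_eq]
    rw [e1, neg_neg]
    rw [ip_conj h _ q, ← stmt_pos h hh (m + 1) q p, ← ip_conj h p _]
end
end

section
/- Let α : ℤ×ℤ → ℂ be antisymmetric (α(m,n) = −α(n,m)) and sl(2,ℂ)-invariant in the sense that (i−m)·α(i+m, n) + (i−n)·α(m, i+n) = 0 for all i ∈ {−1, 0, 1} and all m, n ∈ ℤ. Then there exists c ∈ ℂ such that α(m,n) = c·(m³−m) whenever m+n = 0 and α(m,n) = 0 whenever m+n ≠ 0; i.e. every sl(2,ℂ)-invariant antisymmetric bilinear form on the Witt algebra is a scalar multiple of the Gelfand–Fuchs cocycle. -/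
/-!
Invariance under `e₀` says `(m + n) α(m, n) = 0`, so `α` lives on the antidiagonal, where
`f(m) = α(m, -m)` is odd. Invariance under `e₁` gives the recurrence
`(1 - m) f(m + 1) + (m + 2) f(m) = 0`, which `m³ - m` also satisfies. Since `1 - m ≠ 0` for
`m ≥ 2`, a solution is determined by `f(2)` on `m ≥ 2`, while `f(0) = f(1) = 0`; oddness covers
`m < 0`.
-/

section Recurrence

variable {K : Type*} [Field K] [CharZero K]

theorem eq_zero_of_recurrence_of_odd {h : ℤ → K}
    (hrec : ∀ m : ℤ, (1 - m) * h (m + 1) + (m + 2) * h m = 0)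
    (hodd : ∀ m : ℤ, h (-m) = -h m) (h2 : h 2 = 0) (m : ℤ) : h m = 0 := by
  have h0 : h 0 = 0 := self_eq_neg.mp (by simpa using hodd 0)
  have h1 : h 1 = 0 := by simpa [h0] using hrec 0
  have hnat : ∀ k : ℕ, h k = 0 := by
    intro k
    rcases Nat.lt_or_ge k 2 with hk | hk
    · interval_cases k <;> simpa
    induction k, hk using Nat.le_induction with
    | base => exact_mod_cast h2
    | succ k hk ih =>
      have hk' : (1 - k : K) ≠ 0 := by
        rw [sub_ne_zero]; exact_mod_cast (by omega : 1 ≠ k)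
      have := hrec k
      push_cast at this
      rw [ih, mul_zero, add_zero] at this
      exact_mod_cast (mul_eq_zero.mp this).resolve_left hk'
  obtain ⟨k, rfl | rfl⟩ := Int.eq_nat_or_neg m
  · exact hnat k
  · rw [hodd, hnat, neg_zero]

theorem eq_mul_cube_sub_self_of_recurrence_of_odd {f : ℤ → K}
    (hrec : ∀ m : ℤ, (1 - m) * f (m + 1) + (m + 2) * f m = 0)
    (hodd : ∀ m : ℤ, f (-m) = -f m) (m : ℤ) : f m = f 2 / 6 * ((m : K) ^ 3 - m) := by
  rw [← sub_eq_zero]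
  refine eq_zero_of_recurrence_of_odd (h := fun m => f m - f 2 / 6 * ((m : K) ^ 3 - m))
    (fun m => ?_) (fun m => ?_) ?_ m
  · push_cast
    linear_combination hrec m
  · simp only [hodd, Int.cast_neg]
    ring
  · norm_num

end Recurrence

namespace Witt

variable {K : Type*} [Field K]

/-- Invariance of `α(m, n) = α(e_m, e_n)` under `ad e_i`, where `[e_i, e_m] = (i - m) e_{i+m}`. -/
def InvariantUnder (α : ℤ → ℤ → K) (i : ℤ) : Prop :=
  ∀ m n : ℤ, ((i - m : ℤ) : K) * α (i + m) n + ((i - n : ℤ) : K) * α m (i + n) = 0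

variable {α : ℤ → ℤ → K}

theorem eq_zero_of_add_ne_zero [CharZero K] (h : InvariantUnder α 0) {m n : ℤ}
    (hmn : m + n ≠ 0) : α m n = 0 := by
  have hmn' : ((m + n : ℤ) : K) ≠ 0 := by exact_mod_cast hmn
  have := h m n
  simp only [zero_add, zero_sub, Int.cast_neg] at this
  refine (mul_eq_zero.mp ?_).resolve_left hmn'
  push_cast
  linear_combination -this

theorem antidiagonal_recurrence (h : InvariantUnder α 1) (m : ℤ) :
    (1 - m) * α (m + 1) (-(m + 1)) + (m + 2) * α m (-m) = 0 := by
  have := h m (-1 - m)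
  rw [add_comm 1 m, show (1 : ℤ) + (-1 - m) = -m by ring,
    show (-1 - m : ℤ) = -(m + 1) by ring] at this
  push_cast at this
  linear_combination this

end Witt

/-- Every antisymmetric `sl(2,ℂ)`-invariant bilinear form on the Witt
algebra is a scalar multiple of the Gelfand–Fuchs cocycle `(m³−m)·δ_{m+n,0}`. -/
theorem stmt13 (α : ℤ → ℤ → ℂ)
    (hanti : ∀ m n : ℤ, α m n = -α n m)
    (hinv : ∀ i ∈ ({-1, 0, 1} : Set ℤ), ∀ m n : ℤ,
      ((i - m : ℤ) : ℂ) * α (i + m) n + ((i - n : ℤ) : ℂ) * α m (i + n) = 0) :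
    ∃ c : ℂ, ∀ m n : ℤ,
      (m + n = 0 → α m n = c * (((m : ℂ)) ^ 3 - (m : ℂ))) ∧
      (m + n ≠ 0 → α m n = 0) := by
  have hodd : ∀ m : ℤ, α (-m) (-(-m)) = -α m (-m) := fun m => by
    rw [neg_neg, hanti]
  have hdiag := eq_mul_cube_sub_self_of_recurrence_of_odd (f := fun m => α m (-m))
    (Witt.antidiagonal_recurrence (hinv 1 (by simp))) hodd
  refine ⟨α 2 (-2) / 6, fun m n =>
    ⟨fun hmn => ?_, Witt.eq_zero_of_add_ne_zero (hinv 0 (by simp))⟩⟩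
  obtain rfl : n = -m := by omega
  exact hdiag m
end

section
/- Assume h ∈ ℝ with 2h ∉ ℤ. If (Λ_n)_{n∈ℤ} is any family of linear operators on ℂ[z] satisfying [l_i, Λ_n] = (i−n)·Λ_{i+n} for all i ∈ {−1, 0, 1} and n ∈ ℤ, then there exists λ ∈ ℂ such that Λ_n = λ·L_n for all n ∈ ℤ (the family of tensor operators on V_h transforming under sl(2,ℂ) as the basis e_n of the Witt algebra is unique up to a scalar multiple). -/
open Polynomial

noncomputable section

def Xi (k : ℤ) : Polynomial ℂ := if 0 ≤ k then (X:Polynomial ℂ)^k.toNat else 0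

lemma coeff_smul_Xi (a : ℂ) (k : ℤ) (j : ℕ) :
    (a • Xi k).coeff j = if (j:ℤ) = k then a else 0 := by
  unfold Xi
  split_ifs with h1 h2 h3
  · have : j = k.toNat := by omega
    simp [this, coeff_X_pow]
  · have : j ≠ k.toNat := by omega
    simp [coeff_X_pow, this]
  · omega
  · simp

lemma smul_Xi_inj {a b : ℂ} {k : ℤ} (hk : 0 ≤ k) (e : a • Xi k = b • Xi k) : a = b := by
  have e2 : (a • Xi k).coeff k.toNat = (b • Xi k).coeff k.toNat := by rw [e]
  have ht : ((k.toNat:ℕ):ℤ) = k := Int.toNat_of_nonneg hk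
  simpa only [coeff_smul_Xi, if_pos ht] using e2

lemma Xi_nonneg (k : ℤ) (hk : 0 ≤ k) : Xi k = (X:Polynomial ℂ)^k.toNat := if_pos hk
lemma Xi_neg (k : ℤ) (hk : k < 0) : Xi k = 0 := if_neg (by omega)

lemma lgen_neg_one (h : ℝ) (p : Polynomial ℂ) : lgen h (-1) p = X * p := by
  simp [lgen, mulX]
lemma lgen_zero (h : ℝ) (p : Polynomial ℂ) :
    lgen h 0 p = X * derivative p + (h:ℂ) • p := by
  norm_num [lgen, mulX, der]
lemma lgen_one (h : ℝ) (p : Polynomial ℂ) :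
    lgen h 1 p = X * derivative (derivative p) + ((2*h:ℝ):ℂ) • derivative p := by
  norm_num [lgen, mulX, der]

lemma lgen_zero_pow (h : ℝ) (m : ℕ) :
    lgen h 0 ((X:Polynomial ℂ)^m) = (((m:ℂ) + h)) • (X:Polynomial ℂ)^m := by
  rw [lgen_zero, derivative_X_pow]
  cases m with
  | zero => simp
  | succ m =>
    simp only [Nat.add_sub_cancel, Polynomial.smul_eq_C_mul]
    push_cast
    simp only [C_add, C_1]
    ring

lemma lgen_one_pow (h : ℝ) (m : ℕ) :
    lgen h 1 ((X:Polynomial ℂ)^m) =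
      ((m:ℂ) * ((m:ℂ) - 1 + 2*h)) • (X:Polynomial ℂ)^(m-1) := by
  rw [lgen_one]
  match m with
  | 0 => simp
  | 1 => simp
  | (m+2) =>
    simp only [derivative_X_pow, derivative_C_mul, Nat.add_sub_cancel,
      Polynomial.smul_eq_C_mul]
    push_cast
    simp only [C_add, C_1, C_mul, C_sub, map_ofNat]
    ring

lemma toNat_cast_C {k : ℤ} (hk : 0 ≤ k) : ((k.toNat:ℕ):ℂ) = (k:ℂ) := by
  exact_mod_cast congrArg (Int.cast : ℤ → ℂ) (Int.toNat_of_nonneg hk)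

lemma lgen_zero_smul_Xi (h : ℝ) (a : ℂ) (k : ℤ) :
    lgen h 0 (a • Xi k) = (a * ((k:ℂ) + h)) • Xi k := by
  rcases le_or_gt 0 k with hk | hk
  · rw [Xi_nonneg k hk, map_smul, lgen_zero_pow, smul_smul, toNat_cast_C hk]
  · simp [Xi_neg k hk]

lemma lgen_one_smul_Xi (h : ℝ) (a : ℂ) (k : ℤ) :
    lgen h 1 (a • Xi k) = (a * (k:ℂ) * ((k:ℂ) - 1 + 2*h)) • Xi (k-1) := by
  rcases le_or_gt 0 k with hk | hk
  · rw [Xi_nonneg k hk, map_smul, lgen_one_pow, smul_smul, toNat_cast_C hk]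
    rcases eq_or_lt_of_le hk with hk0 | hk1
    · rw [← hk0]
      norm_num [Xi_neg (-1 : ℤ) (by norm_num)]
    · have : (k.toNat - 1 : ℕ) = (k-1).toNat := by omega
      rw [this, ← Xi_nonneg (k-1) (by omega)]
      ring_nf
  · rw [Xi_neg k hk, Xi_neg (k-1) (by omega)]
    simp

lemma mulX_smul_Xi (a : ℂ) (k : ℤ) (h0 : k < 0 → a = 0) :
    (X:Polynomial ℂ) * (a • Xi k) = a • Xi (k+1) := by
  rcases le_or_gt 0 k with hk | hk
  · rw [Xi_nonneg k hk, Xi_nonneg (k+1) (by omega)]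
    have : (k+1).toNat = k.toNat + 1 := by omega
    rw [this, mul_smul_comm, pow_succ]
    ring_nf
  · rw [h0 hk]
    simp

-- new material
def cf (Λ : ℤ → Module.End ℂ (Polynomial ℂ)) (n : ℤ) (m : ℕ) : ℂ :=
  ((Λ n) ((X:Polynomial ℂ)^m)).coeff (((m:ℤ) - n).toNat)

lemma eig_shape (q : Polynomial ℂ) (w : ℤ) (hz : ∀ j:ℕ, (j:ℤ) ≠ w → q.coeff j = 0) :
    q = q.coeff w.toNat • Xi w := by
  ext j
  rw [coeff_smul_Xi]
  split_ifs with hj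
  · have : j = w.toNat := by omega
    rw [this]
  · exact hz j hj

lemma coeff_X_mul_derivative (q : Polynomial ℂ) (j : ℕ) :
    ((X:Polynomial ℂ) * derivative q).coeff j = (j:ℂ) * q.coeff j := by
  cases j with
  | zero => simp [Polynomial.mul_coeff_zero]
  | succ j =>
    rw [Polynomial.coeff_X_mul, Polynomial.coeff_derivative]
    push_cast
    ring

section fam
variable (h : ℝ) (Λ : ℤ → Module.End ℂ (Polynomial ℂ))

lemma shape
    (hc0 : ∀ n : ℤ, lgen h 0 * Λ n - Λ n * lgen h 0 = ((0 - n : ℤ) : ℂ) • Λ (0 + n))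
    (n : ℤ) (m : ℕ) :
    Λ n ((X:Polynomial ℂ)^m) = cf Λ n m • Xi ((m:ℤ) - n) := by
  have E := congrArg (fun T : Module.End ℂ (Polynomial ℂ) => T ((X:Polynomial ℂ)^m)) (hc0 n)
  simp only [LinearMap.sub_apply, Module.End.mul_apply, LinearMap.smul_apply] at E
  rw [lgen_zero_pow, map_smul] at E
  set q := Λ n ((X:Polynomial ℂ)^m) with hqdef
  rw [zero_add] at E
  -- E : lgen h 0 q - (m+h) • q = (0-n:ℤ) • q
  have hq : (X:Polynomial ℂ) * derivative q = ((m:ℂ) - (n:ℂ)) • q := by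
    rw [lgen_zero] at E
    rw [← hqdef] at E
    simp only [Polynomial.smul_eq_C_mul] at E ⊢
    push_cast at E
    simp only [C_add, C_sub, C_neg, C_0, zero_sub] at E ⊢
    linear_combination E
  have hz : ∀ j:ℕ, (j:ℤ) ≠ (m:ℤ) - n → q.coeff j = 0 := by
    intro j hj
    have := congrArg (fun p => Polynomial.coeff p j) hq
    simp only [coeff_X_mul_derivative, Polynomial.coeff_smul, smul_eq_mul] at this
    have hne : (j:ℂ) - ((m:ℂ) - (n:ℂ)) ≠ 0 := by
      intro e
      apply hj
      have : ((j:ℤ):ℂ) = (((m:ℤ) - n : ℤ):ℂ) := by push_cast; linear_combination e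
      exact_mod_cast this
    have : ((j:ℂ) - ((m:ℂ) - (n:ℂ))) * q.coeff j = 0 := by rw [sub_mul, this]; ring
    exact (mul_eq_zero.mp this).resolve_left hne
  exact eig_shape q _ hz

lemma cfZero
    (hc0 : ∀ n : ℤ, lgen h 0 * Λ n - Λ n * lgen h 0 = ((0 - n : ℤ) : ℂ) • Λ (0 + n))
    {n : ℤ} {m : ℕ} (hmn : (m:ℤ) < n) : cf Λ n m = 0 := by
  have hs := shape h Λ hc0 n m
  rw [Xi_neg _ (by omega), smul_zero] at hs
  unfold cf
  rw [hs, Polynomial.coeff_zero]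

lemma relA
    (hc0 : ∀ n : ℤ, lgen h 0 * Λ n - Λ n * lgen h 0 = ((0 - n : ℤ) : ℂ) • Λ (0 + n))
    (hcm1 : ∀ n : ℤ, lgen h (-1) * Λ n - Λ n * lgen h (-1) = ((-1 - n : ℤ) : ℂ) • Λ (-1 + n))
    (n : ℤ) (m : ℕ) :
    cf Λ n (m+1) = cf Λ n m + ((n:ℂ)+1) * cf Λ (n-1) m := by
  rcases le_or_gt n ((m:ℤ)+1) with hle | hlt
  · have E := congrArg (fun T : Module.End ℂ (Polynomial ℂ) => T ((X:Polynomial ℂ)^m)) (hcm1 n)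
    simp only [LinearMap.sub_apply, Module.End.mul_apply, LinearMap.smul_apply] at E
    rw [lgen_neg_one, lgen_neg_one] at E
    have hXm : (X:Polynomial ℂ) * (X:Polynomial ℂ)^m = (X:Polynomial ℂ)^(m+1) := by
      rw [pow_succ]; ring
    rw [hXm, shape h Λ hc0 n m, shape h Λ hc0 n (m+1), shape h Λ hc0 (-1+n) m] at E
    rw [mulX_smul_Xi _ _ (fun hneg => cfZero h Λ hc0 (by omega))] at E
    have i1 : (m:ℤ) - n + 1 = ((m+1:ℕ):ℤ) - n := by push_cast; ring
    have i2 : (m:ℤ) - (-1+n) = ((m+1:ℕ):ℤ) - n := by push_cast; ring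
    rw [i1, i2, smul_smul] at E
    rw [← sub_smul] at E
    have hE := smul_Xi_inj (by push_cast; omega) E
    have hn : (-1 + n : ℤ) = n - 1 := by ring
    rw [hn] at hE
    have : ((-1 - n : ℤ):ℂ) = -1 - (n:ℂ) := by push_cast; ring
    rw [this] at hE
    linear_combination -hE
  · have z1 : cf Λ n (m+1) = 0 := cfZero h Λ hc0 (by push_cast; omega)
    have z2 : cf Λ n m = 0 := cfZero h Λ hc0 (by omega)
    have z3 : cf Λ (n-1) m = 0 := cfZero h Λ hc0 (by omega)
    rw [z1, z2, z3]; ring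

lemma relB
    (hc0 : ∀ n : ℤ, lgen h 0 * Λ n - Λ n * lgen h 0 = ((0 - n : ℤ) : ℂ) • Λ (0 + n))
    (hc1 : ∀ n : ℤ, lgen h 1 * Λ n - Λ n * lgen h 1 = ((1 - n : ℤ) : ℂ) • Λ (1 + n))
    (n : ℤ) (m : ℕ) :
    ((m:ℂ) - n) * ((m:ℂ) - n - 1 + 2*h) * cf Λ n m
      - (m:ℂ) * ((m:ℂ) - 1 + 2*h) * cf Λ n (m-1)
      = (1 - (n:ℂ)) * cf Λ (n+1) m := by
  have E := congrArg (fun T : Module.End ℂ (Polynomial ℂ) => T ((X:Polynomial ℂ)^m)) (hc1 n)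
  simp only [LinearMap.sub_apply, Module.End.mul_apply, LinearMap.smul_apply] at E
  rw [lgen_one_pow, map_smul, shape h Λ hc0 n m, lgen_one_smul_Xi,
      shape h Λ hc0 n (m-1), shape h Λ hc0 (1+n) m] at E
  rw [smul_smul, smul_smul] at E
  have hn : (1 + n : ℤ) = n + 1 := by ring
  rw [hn] at E
  have hc : ((1 - n : ℤ):ℂ) = 1 - (n:ℂ) := by push_cast; ring
  rw [hc] at E
  -- now handle the index of the middle term
  rcases Nat.eq_zero_or_pos m with hm0 | hm1
  · subst hm0
    -- middle coefficient is zero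
    have E' : (cf Λ n 0 * ((0:ℂ) - n) * ((0:ℂ) - n - 1 + 2*h)) • Xi ((0:ℤ) - n - 1)
        = ((1 - (n:ℂ)) * cf Λ (n+1) 0) • Xi ((0:ℤ) - (n+1)) := by
      have : ((0:ℕ):ℂ) * (((0:ℕ):ℂ) - 1 + 2*(h:ℂ)) = 0 := by norm_num
      rw [this, zero_mul, zero_smul, sub_zero] at E
      exact_mod_cast E
    have i3 : (0:ℤ) - (n+1) = (0:ℤ) - n - 1 := by ring
    rw [i3] at E'
    rcases le_or_gt (n+1) 0 with hle | hlt
    · have := smul_Xi_inj (k := (0:ℤ) - n - 1) (by omega) E'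
      push_cast
      linear_combination this
    · have z1 : cf Λ n 0 = 0 ∨ ((0:ℂ) - n) = 0 := by
        rcases lt_or_eq_of_le (by omega : (0:ℤ) ≤ n) with hx | hx
        · exact Or.inl (cfZero h Λ hc0 (by omega))
        · right; rw [← hx]; norm_num
      have z2 : cf Λ (n+1) 0 = 0 := cfZero h Λ hc0 (by omega)
      push_cast
      rw [z2]
      rcases z1 with z1 | z1
      · rw [z1]; ring
      · rw [z1]; ring
  · -- m ≥ 1
    obtain ⟨m', rfl⟩ : ∃ m', m = m' + 1 := ⟨m - 1, by omega⟩
    have i4 : ((m' + 1 - 1 : ℕ):ℤ) - n = ((m'+1:ℕ):ℤ) - 1 - n := by push_cast; omega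
    rw [i4] at E
    have i5 : ((m'+1:ℕ):ℤ) - n - 1 = ((m'+1:ℕ):ℤ) - 1 - n := by ring
    have i6 : ((m'+1:ℕ):ℤ) - (n+1) = ((m'+1:ℕ):ℤ) - 1 - n := by ring
    rw [i5, i6] at E
    rw [← sub_smul] at E
    set M : ℂ := ((m'+1:ℕ):ℂ) with hM
    have hc3 : (((((m'+1:ℕ)):ℤ) - n :ℤ):ℂ) = M - (n:ℂ) := by rw [hM]; push_cast; ring
    rw [hc3] at E
    rcases le_or_gt (n+1) ((m':ℤ)+1) with hle | hlt
    · have := smul_Xi_inj (k := ((m'+1:ℕ):ℤ) - 1 - n) (by push_cast; omega) E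
      linear_combination this
    · have z1 : cf Λ (n+1) (m'+1) = 0 := cfZero h Λ hc0 (by push_cast; omega)
      have z2 : cf Λ n (m'+1-1) = 0 := cfZero h Λ hc0 (by push_cast; omega)
      rw [z1, z2]
      rcases lt_or_eq_of_le (by omega : ((m':ℤ)+1) ≤ n) with hx | hx
      · have z3 : cf Λ n (m'+1) = 0 := cfZero h Λ hc0 (by push_cast; omega)
        rw [z3]; ring
      · have : M - (n:ℂ) = 0 := by
          rw [hM, ← hx]; push_cast; ring
        rw [this]; ring
end fam

def bco (h : ℝ) (n : ℤ) (m : ℕ) : ℂ :=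
  if 0 ≤ n then
    (((m : ℂ) - (n : ℂ)) + ((n : ℂ) + 1) * (h : ℂ)) * (m.descFactorial n.toNat : ℂ)
  else
    ((m : ℂ) + (((-n).toNat : ℂ) + 1) * (h : ℂ)) /
      ∏ j ∈ Finset.range (-n).toNat, ((m : ℂ) + 2 * (h : ℂ) + (j : ℂ))

lemma LopX (h : ℝ) (n : ℤ) (m : ℕ) :
    Lop h n ((X:Polynomial ℂ)^m) = bco h n m • Xi ((m:ℤ) - n) := by
  have hb : (X:Polynomial ℂ)^m = (Polynomial.basisMonomials ℂ) m := by
    simp [X_pow_eq_monomial]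
  rw [hb]
  unfold Lop
  rw [Module.Basis.constr_basis]
  unfold bco
  rcases le_or_gt 0 n with hn | hn
  · rw [if_pos hn, if_pos hn]
    rcases le_or_gt n (m:ℤ) with hnm | hnm
    · have : (m - n.toNat : ℕ) = ((m:ℤ) - n).toNat := by omega
      rw [this, Xi_nonneg _ (by omega)]
    · have hz : (m.descFactorial n.toNat : ℂ) = 0 := by
        rw [Nat.descFactorial_eq_zero_iff_lt.mpr (by omega)]
        norm_num
      rw [hz]
      simp
  · rw [if_neg (by omega), if_neg (by omega)]
    have : (m + (-n).toNat : ℕ) = ((m:ℤ) - n).toNat := by omega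
    rw [this, Xi_nonneg _ (by omega)]

lemma dfC (m k : ℕ) :
    (m.descFactorial (k+1) : ℂ) = ((m:ℂ) - (k:ℂ)) * (m.descFactorial k : ℂ) := by
  rcases le_or_gt k m with hk | hk
  · rw [Nat.descFactorial_succ]
    push_cast [hk]
    ring
  · rw [Nat.descFactorial_eq_zero_iff_lt.mpr hk,
      Nat.descFactorial_eq_zero_iff_lt.mpr (by omega)]
    norm_num

lemma dfS (m k : ℕ) :
    ((m+1).descFactorial (k+1) : ℂ) = ((m:ℂ)+1) * (m.descFactorial k : ℂ) := by
  rw [Nat.succ_descFactorial_succ]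
  push_cast
  ring

lemma dfC2 (m k : ℕ) :
    ((m:ℂ)+1) * (m.descFactorial k : ℂ) = (((m:ℂ)+1) - (k:ℂ)) * ((m+1).descFactorial k : ℂ) := by
  cases k with
  | zero => simp
  | succ k =>
    rw [dfC m k, dfS m k]
    push_cast
    ring

section s
variable {h : ℝ} (hnd : ∀ n : ℤ, 2*h ≠ (n:ℝ))
include hnd

lemma Hne {a : ℂ} (t : ℤ) (ha : a = (t:ℂ) + 2*(h:ℂ)) : a ≠ 0 := by
  subst ha
  intro e
  have h2 : ((t + 2*h : ℝ):ℂ) = 0 := by push_cast; linear_combination e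
  have h3 := Complex.ofReal_eq_zero.mp h2
  exact hnd (-t) (by push_cast; linarith)

lemma prodNe (m : ℂ) (hm : ∃ t : ℤ, m = (t:ℂ)) (K : ℕ) :
    (∏ j ∈ Finset.range K, (m + 2*(h:ℂ) + (j:ℂ))) ≠ 0 := by
  obtain ⟨t, rfl⟩ := hm
  exact Finset.prod_ne_zero_iff.mpr fun j _ => Hne hnd (t + j) (by push_cast; ring)

omit hnd in
lemma prodShift (m : ℂ) (K : ℕ) :
    ∏ j ∈ Finset.range (K+1), (m + 2*(h:ℂ) + (j:ℂ)) =
      (m + 2*(h:ℂ)) * ∏ j ∈ Finset.range K, ((m+1) + 2*(h:ℂ) + (j:ℂ)) := by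
  rw [Finset.prod_range_succ']
  have : ∀ j ∈ Finset.range K, (m + 2*(h:ℂ) + ((j+1:ℕ):ℂ)) = ((m+1) + 2*(h:ℂ) + (j:ℂ)) := by
    intro j _
    push_cast
    ring
  rw [Finset.prod_congr rfl this]
  push_cast
  ring

omit hnd in
lemma bcoZ {n : ℤ} {m : ℕ} (hmn : (m:ℤ) < n) : bco h n m = 0 := by
  unfold bco
  rw [if_pos (by omega)]
  rw [Nat.descFactorial_eq_zero_iff_lt.mpr (by omega)]
  norm_num

lemma bcoA (n : ℤ) (m : ℕ) :
    bco h n (m+1) = bco h n m + ((n:ℂ)+1) * bco h (n-1) m := by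
  rcases lt_trichotomy n 0 with hn | hn | hn
  · -- n ≤ -1
    unfold bco
    rw [if_neg (by omega), if_neg (by omega), if_neg (by omega)]
    set K := (-n).toNat with hK
    have hK1 : 1 ≤ K := by omega
    have hKn : ((-(n-1)).toNat) = K + 1 := by omega
    rw [hKn]
    have hcn : (n:ℂ) = -(K:ℂ) := by
      have h0 : ((K:ℕ):ℤ) = -n := Int.toNat_of_nonneg (by omega)
      have h0' := congrArg (Int.cast : ℤ → ℂ) h0
      push_cast at h0'
      linear_combination h0'
    rw [hcn]
    push_cast
    set P := ∏ j ∈ Finset.range K, ((m:ℂ) + 2*(h:ℂ) + (j:ℂ)) with hP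
    set Q := ∏ j ∈ Finset.range K, ((m:ℂ) + 1 + 2*(h:ℂ) + (j:ℂ)) with hQ
    have key : ((m:ℂ) + 2*(h:ℂ)) * Q = P * ((m:ℂ) + 2*(h:ℂ) + (K:ℂ)) := by
      rw [hQ, hP, ← prodShift, Finset.prod_range_succ]
    have hPne : P ≠ 0 := prodNe hnd _ ⟨(m:ℤ), by push_cast; ring⟩ K
    have hQne : Q ≠ 0 := by
      have := prodNe hnd ((m:ℂ)+1) ⟨(m:ℤ)+1, by push_cast; ring⟩ K
      rw [hQ]; exact this
    have h1 : ((m:ℂ) + 2*(h:ℂ)) ≠ 0 := Hne hnd (m:ℤ) (by push_cast; ring)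
    have h2 : ((m:ℂ) + 2*(h:ℂ) + (K:ℂ)) ≠ 0 := Hne hnd ((m:ℤ) + K) (by push_cast; ring)
    rw [Finset.prod_range_succ, ← hP]
    have hQ' : Q = P * ((m:ℂ) + 2*(h:ℂ) + (K:ℂ)) / ((m:ℂ) + 2*(h:ℂ)) := by
      rw [eq_div_iff h1]; linear_combination key
    rw [hQ']
    have h2' : (m:ℂ) + (K:ℂ) + (h:ℂ)*2 ≠ 0 := by convert h2 using 1; ring
    field_simp
    ring_nf
    field_simp
    ring
  · subst hn
    unfold bco
    norm_num
    rw [div_self (Hne hnd (m:ℤ) (by push_cast; ring))]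
    ring
  · -- n ≥ 1
    unfold bco
    rw [if_pos (by omega), if_pos (by omega), if_pos (by omega)]
    set k' := (n-1).toNat with hk'
    have h1 : n.toNat = k' + 1 := by omega
    have h2 : (n-1).toNat = k' := rfl
    have hc1 : (n:ℂ) = (k':ℂ) + 1 := by
      have h0 : ((k':ℕ):ℤ) = n - 1 := Int.toNat_of_nonneg (by omega)
      have h0' := congrArg (Int.cast : ℤ → ℂ) h0
      push_cast at h0'
      linear_combination -h0'
    have hc2 : ((n-1:ℤ):ℂ) = (k':ℂ) := by push_cast; linear_combination hc1
    rw [h1, hc1, hc2, dfS m k', dfC m k']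
    push_cast
    ring

lemma bcoB (n : ℤ) (m : ℕ) :
    ((m:ℂ) - n) * ((m:ℂ) - n - 1 + 2*(h:ℂ)) * bco h n m
      - (m:ℂ) * ((m:ℂ) - 1 + 2*(h:ℂ)) * bco h n (m-1)
      = (1 - (n:ℂ)) * bco h (n+1) m := by
  rcases le_or_gt 1 n with hn | hn
  · -- n ≥ 1
    cases m with
    | zero =>
      have z1 : bco h n 0 = 0 := bcoZ (by omega)
      have z2 : bco h (n+1) 0 = 0 := bcoZ (by omega)
      rw [Nat.zero_sub, z1, z2]
      norm_num
    | succ m'' =>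
      unfold bco
      rw [if_pos (by omega), if_pos (by omega), if_pos (by omega)]
      set k := n.toNat with hk
      have hk1 : (n+1).toNat = k + 1 := by omega
      have hcn : (n:ℂ) = (k:ℂ) := by
        have h0 : ((k:ℕ):ℤ) = n := Int.toNat_of_nonneg (by omega)
        have h0' := congrArg (Int.cast : ℤ → ℂ) h0
        push_cast at h0'
        linear_combination -h0'
      have hm1 : (m'' + 1 - 1 : ℕ) = m'' := by omega
      rw [hk1, hm1, dfC (m''+1) k]
      have e2 := dfC2 m'' k
      push_cast
      push_cast at e2
      rw [hcn]
      linear_combination (-(((m'':ℂ) + 2*(h:ℂ)) * ((m'':ℂ) - (k:ℂ) + ((k:ℂ)+1)*(h:ℂ)))) * e2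
  rcases le_or_gt 0 n with hn0 | hn0
  · -- n = 0
    have : n = 0 := by omega
    subst this
    unfold bco
    norm_num [Nat.descFactorial_one]
    cases m with
    | zero => norm_num
    | succ m'' =>
      have hm1 : (m'' + 1 - 1 : ℕ) = m'' := by omega
      rw [hm1]
      push_cast
      ring
  rcases eq_or_lt_of_le (by omega : n ≤ -1) with hn1 | hn1
  · -- n = -1
    subst hn1
    unfold bco
    norm_num
    cases m with
    | zero =>
      norm_num
      rw [div_self (Hne hnd (0:ℤ) (by push_cast; ring))]
      ring
    | succ m'' =>
      have hm1 : (m'' + 1 - 1 : ℕ) = m'' := by omega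
      rw [hm1]
      push_cast
      have d1 : ((m'':ℂ) + 1 + 2*(h:ℂ)) ≠ 0 := Hne hnd ((m'':ℤ)+1) (by push_cast; ring)
      have d2 : ((m'':ℂ) + 2*(h:ℂ)) ≠ 0 := Hne hnd ((m'':ℤ)) (by push_cast; ring)
      field_simp
      ring
  · -- n ≤ -2
    unfold bco
    rw [if_neg (by omega), if_neg (by omega), if_neg (by omega)]
    set K := (-n).toNat with hK
    obtain ⟨K'', hK2⟩ : ∃ K'', K = K'' + 1 := ⟨K - 1, by omega⟩
    have hK1 : 1 ≤ K'' := by omega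
    have hKn : ((-(n+1)).toNat) = K'' := by omega
    have hcn : (n:ℂ) = -(K:ℂ) := by
      have h0 : ((K:ℕ):ℤ) = -n := Int.toNat_of_nonneg (by omega)
      have h0' := congrArg (Int.cast : ℤ → ℂ) h0
      push_cast at h0'
      linear_combination h0'
    rw [hKn, hcn, hK2]
    cases m with
    | zero =>
      push_cast
      rw [Finset.prod_range_succ]
      simp only [zero_add]
      have hP : (∏ j ∈ Finset.range K'', (2*(h:ℂ) + (j:ℂ))) ≠ 0 := by
        have := prodNe hnd 0 ⟨0, by norm_num⟩ K''
        simpa using this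
      have d1 : (2*(h:ℂ) + (K'':ℂ)) ≠ 0 := Hne hnd ((K'':ℤ)) (by push_cast; ring)
      field_simp
      ring
    | succ m'' =>
      have hm1 : (m'' + 1 - 1 : ℕ) = m'' := by omega
      rw [hm1]
      push_cast
      rw [Finset.prod_range_succ, prodShift (m'':ℂ) K'']
      have hP : (∏ j ∈ Finset.range K'', ((m'':ℂ) + 1 + 2*(h:ℂ) + (j:ℂ))) ≠ 0 := by
        have := prodNe hnd ((m'':ℂ)+1) ⟨(m'':ℤ)+1, by push_cast; ring⟩ K''
        convert this using 2
      have d1 : ((m'':ℂ) + 1 + 2*(h:ℂ) + (K'':ℂ)) ≠ 0 := Hne hnd ((m'':ℤ)+1+K'') (by push_cast; ring)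
      have d2 : ((m'':ℂ) + 2*(h:ℂ)) ≠ 0 := Hne hnd ((m'':ℤ)) (by push_cast; ring)
      field_simp
      ring

omit hnd in
lemma intNe {x : ℂ} (t : ℤ) (ht : t ≠ 0) (hx : x = (t:ℂ)) : x ≠ 0 := by
  subst hx
  exact_mod_cast Int.cast_ne_zero.mpr ht

lemma KEY (d : ℤ → ℕ → ℂ)
    (hZ : ∀ (n:ℤ) (m:ℕ), (m:ℤ) < n → d n m = 0)
    (hA : ∀ (n:ℤ) (m:ℕ), d n (m+1) = d n m + ((n:ℂ)+1) * d (n-1) m)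
    (hB : ∀ (n:ℤ) (m:ℕ), ((m:ℂ) - n) * ((m:ℂ) - n - 1 + 2*(h:ℂ)) * d n m
        - (m:ℂ)*((m:ℂ)-1+2*(h:ℂ)) * d n (m-1) = (1 - (n:ℂ)) * d (n+1) m)
    (h11 : d 1 1 = 0) : ∀ n m, d n m = 0 := by
  have row1 : ∀ m : ℕ, d 1 m = 0 := by
    intro m
    induction m with
    | zero => exact hZ 1 0 (by norm_num)
    | succ m ih =>
      match m, ih with
      | 0, _ => exact h11
      | (m'+1), ih =>
        have hb := hB 1 (m'+2)
        rw [show (m'+2-1 : ℕ) = m'+1 from rfl, ih] at hb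
        have e : (((m'+2:ℕ):ℂ) - 1) * (((m'+2:ℕ):ℂ) - 1 - 1 + 2*(h:ℂ)) * d 1 (m'+2) = 0 := by
          push_cast
          push_cast at hb
          linear_combination hb
        have h1 : ((m'+2:ℕ):ℂ) - 1 ≠ 0 := intNe ((m':ℤ)+1) (by omega) (by push_cast; ring)
        have h2 : ((m'+2:ℕ):ℂ) - 1 - 1 + 2*(h:ℂ) ≠ 0 := Hne hnd (m':ℤ) (by push_cast; ring)
        exact (mul_eq_zero.mp e).resolve_left (mul_ne_zero h1 h2)
  have row0 : ∀ m : ℕ, d 0 m = 0 := by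
    intro m
    have ha := hA 1 m
    rw [row1, row1] at ha
    push_cast at ha
    linear_combination -ha/2
  have rowm1 : ∀ m : ℕ, d (-1) m = 0 := by
    intro m
    have ha := hA 0 m
    rw [row0, row0] at ha
    push_cast at ha
    linear_combination -ha
  have up : ∀ (k:ℕ) (m:ℕ), d (1 + (k:ℤ)) m = 0 := by
    intro k
    induction k with
    | zero => intro m; simpa using row1 m
    | succ k ih =>
      intro m
      induction m with
      | zero => exact hZ _ 0 (by push_cast; omega)
      | succ m ihm =>
        have hc : (1 + ((k+1:ℕ):ℤ)) = (1 + ((k:ℤ)+1)) := by push_cast; ring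
        rw [hc] at ihm ⊢
        have ha := hA (1 + ((k:ℤ)+1)) m
        rw [show (1 + ((k:ℤ)+1)) - 1 = 1 + (k:ℤ) by ring, ih m, ihm] at ha
        rw [ha]
        ring
  have down : ∀ (k:ℕ) (m:ℕ), d (-1 - (k:ℤ)) m = 0 := by
    intro k
    induction k with
    | zero => intro m; simpa using rowm1 m
    | succ k ih =>
      intro m
      have hc : (-1 - ((k+1:ℕ):ℤ)) = (-2 - (k:ℤ)) := by push_cast; ring
      rw [hc]
      induction m with
      | zero =>
        have hb := hB (-2 - (k:ℤ)) 0
        rw [show (-2 - (k:ℤ)) + 1 = -1 - (k:ℤ) by ring, ih 0] at hb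
        have e : ((k:ℂ)+2) * (((k:ℂ)+1) + 2*(h:ℂ)) * d (-2-(k:ℤ)) 0 = 0 := by
          push_cast at hb
          linear_combination hb
        have h1 : ((k:ℂ)+2) ≠ 0 := intNe ((k:ℤ)+2) (by omega) (by push_cast; ring)
        have h2 : (((k:ℂ)+1) + 2*(h:ℂ)) ≠ 0 := Hne hnd ((k:ℤ)+1) (by push_cast; ring)
        exact (mul_eq_zero.mp e).resolve_left (mul_ne_zero h1 h2)
      | succ m ihm =>
        have hb := hB (-2-(k:ℤ)) (m+1)
        rw [Nat.add_sub_cancel, ihm, show (-2 - (k:ℤ)) + 1 = -1 - (k:ℤ) by ring,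
          ih (m+1)] at hb
        have e : (((m:ℂ)+(k:ℂ)+3)) * ((((m:ℂ)+(k:ℂ)+2)) + 2*(h:ℂ)) * d (-2-(k:ℤ)) (m+1) = 0 := by
          push_cast at hb
          linear_combination hb
        have h1 : (((m:ℂ)+(k:ℂ)+3)) ≠ 0 := intNe ((m:ℤ)+k+3) (by omega) (by push_cast; ring)
        have h2 : ((((m:ℂ)+(k:ℂ)+2)) + 2*(h:ℂ)) ≠ 0 := Hne hnd ((m:ℤ)+k+2) (by push_cast; ring)
        exact (mul_eq_zero.mp e).resolve_left (mul_ne_zero h1 h2)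
  intro n m
  rcases lt_trichotomy n 0 with hn | hn | hn
  · have hrep : n = -1 - ((-1-n).toNat : ℤ) := by omega
    rw [hrep]
    exact down _ m
  · subst hn
    exact row0 m
  · have hrep : n = 1 + ((n-1).toNat : ℤ) := by omega
    rw [hrep]
    exact up _ m
end s


/-- For `2h ∉ ℤ`, any family of tensor operators transforming under
`sl(2,ℂ)` as the basis `e_n` of the Witt algebra is a scalar multiple of the
`q_R`-conformal symmetries. -/
theorem stmt15 (h : ℝ) (hnd : ∀ n : ℤ, 2 * h ≠ (n : ℝ))
    (Λ : ℤ → Module.End ℂ (Polynomial ℂ))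
    (hcomm : ∀ i ∈ ({-1, 0, 1} : Set ℤ), ∀ n : ℤ,
      lgen h i * Λ n - Λ n * lgen h i = ((i - n : ℤ) : ℂ) • Λ (i + n)) :
    ∃ lam : ℂ, ∀ n : ℤ, Λ n = lam • Lop h n := by
  have hnd' : ∀ n : ℤ, 2 * h ≠ (n : ℝ) := hnd
  have hc0 : ∀ n : ℤ, lgen h 0 * Λ n - Λ n * lgen h 0 = ((0 - n : ℤ) : ℂ) • Λ (0 + n) :=
    fun n => hcomm 0 (by norm_num) n
  have hcm1 : ∀ n : ℤ, lgen h (-1) * Λ n - Λ n * lgen h (-1) = ((-1 - n : ℤ) : ℂ) • Λ (-1 + n) :=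
    fun n => hcomm (-1) (by norm_num) n
  have hc1 : ∀ n : ℤ, lgen h 1 * Λ n - Λ n * lgen h 1 = ((1 - n : ℤ) : ℂ) • Λ (1 + n) :=
    fun n => hcomm 1 (by norm_num) n
  have h2 : (2*(h:ℂ)) ≠ 0 := by
    intro e
    apply hnd 0
    have h3 : ((2*h:ℝ):ℂ) = 0 := by push_cast; linear_combination e
    have h4 := Complex.ofReal_eq_zero.mp h3
    push_cast
    linarith
  set lam := cf Λ 1 1 / (2*(h:ℂ)) with hlam
  have hb11 : bco h 1 1 = 2*(h:ℂ) := by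
    unfold bco
    norm_num
  have hZd : ∀ (n:ℤ) (m:ℕ), (m:ℤ) < n → cf Λ n m - lam * bco h n m = 0 := by
    intro n m hmn
    rw [cfZero h Λ hc0 hmn, bcoZ hmn]
    ring
  have hAd : ∀ (n:ℤ) (m:ℕ), cf Λ n (m+1) - lam * bco h n (m+1)
      = (cf Λ n m - lam * bco h n m) + ((n:ℂ)+1) * (cf Λ (n-1) m - lam * bco h (n-1) m) := by
    intro n m
    linear_combination relA h Λ hc0 hcm1 n m - lam * bcoA hnd n m
  have hBd : ∀ (n:ℤ) (m:ℕ), ((m:ℂ) - n) * ((m:ℂ) - n - 1 + 2*(h:ℂ)) * (cf Λ n m - lam * bco h n m)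
      - (m:ℂ)*((m:ℂ)-1+2*(h:ℂ)) * (cf Λ n (m-1) - lam * bco h n (m-1))
      = (1 - (n:ℂ)) * (cf Λ (n+1) m - lam * bco h (n+1) m) := by
    intro n m
    linear_combination relB h Λ hc0 hc1 n m - lam * bcoB hnd n m
  have h11d : cf Λ 1 1 - lam * bco h 1 1 = 0 := by
    rw [hb11, hlam]
    rw [div_mul_cancel₀ _ h2, sub_self]
  have hkey := KEY hnd (fun n m => cf Λ n m - lam * bco h n m) hZd hAd hBd h11d
  refine ⟨lam, fun n => ?_⟩
  apply (Polynomial.basisMonomials ℂ).ext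
  intro m
  have hbm : (Polynomial.basisMonomials ℂ) m = (X:Polynomial ℂ)^m := by
    simp [X_pow_eq_monomial]
  rw [hbm, LinearMap.smul_apply, shape h Λ hc0 n m, LopX, smul_smul]
  have hcfb : cf Λ n m = lam * bco h n m := by linear_combination hkey n m
  rw [hcfb]
end
end
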